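/- arXiv:2510.13397 — 10 statements merged into one kernel-verified Lean document; each statement's English description precedes it below -/
import Mathlib

section
/- Let Q be a probability measure (representing the conditional distribution given X = x and A = a), let T and C be real-valued random variables with 0 ≤ T ≤ t_max and 0 ≤ C almost surely under Q, let T̃ := min(T, C), D := {C ≤ T}, and suppose 0 < Q(D) < 1. If γ is a real number with E_{Q(·|D)}[T − T̃] ≤ γ, then E_Q[T] ≤ E_{Q(·|Dᶜ)}[T] · (1 − Q(D)) + (E_{Q(·|D)}[T̃] + γ) · Q(D). That is, μ(x,a) ≤ μ⁺(x,a) := ν(0,x,a)(1−ξ(x,a)) + ν̃(1,x,a)ξ(x,a) + γ ξ(x,a), the domain-knowledge upper bound. -/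
/-!
Split `E_Q[T]` over the censoring event `D` and its complement (law of total expectation).
On `D`, linearity gives `E[T | D] = E[T̃ | D] + E[T - T̃ | D] ≤ E[T̃ | D] + γ`, and the
bounds `0 ≤ T ≤ t_max`, `0 ≤ C` make `T` and `T̃` integrable so that linearity applies.
-/

open MeasureTheory ProbabilityTheory

namespace ProbabilityTheory

variable {Ω : Type*} [MeasurableSpace Ω] {μ : Measure Ω} {s : Set Ω} {f : Ω → ℝ}

theorem _root_.MeasureTheory.Integrable.cond (hf : Integrable f μ) : Integrable f μ[|s] := by
  rcases eq_or_ne (μ s) 0 with hs | hs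
  · simp [cond_eq_zero_of_meas_eq_zero hs]
  · exact hf.restrict.smul_measure (ENNReal.inv_ne_top.2 hs)

theorem integral_cond_mul_toReal (f : Ω → ℝ) (hs : μ s ≠ ⊤) :
    (∫ x, f x ∂μ[|s]) * (μ s).toReal = ∫ x in s, f x ∂μ := by
  rcases eq_or_ne (μ s) 0 with hs₀ | hs₀
  · simp [hs₀, setIntegral_measure_zero]
  · rw [cond, integral_smul_measure, ENNReal.toReal_inv, smul_eq_mul, mul_comm, ← mul_assoc,
      mul_inv_cancel₀ (ENNReal.toReal_ne_zero.2 ⟨hs₀, hs⟩), one_mul]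

theorem integral_eq_integral_cond_compl_mul_add [IsFiniteMeasure μ] (hs : MeasurableSet s)
    (hf : Integrable f μ) :
    ∫ x, f x ∂μ = (∫ x, f x ∂μ[|sᶜ]) * (μ sᶜ).toReal + (∫ x, f x ∂μ[|s]) * (μ s).toReal := by
  rw [integral_cond_mul_toReal f (measure_ne_top μ _),
    integral_cond_mul_toReal f (measure_ne_top μ _), add_comm, integral_add_compl hs hf]

end ProbabilityTheory

theorem capo_domain_knowledge_upper_bound_general
    {Ω : Type*} [MeasurableSpace Ω] (Q : Measure Ω) [IsProbabilityMeasure Q]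
    (T C : Ω → ℝ) (hTm : Measurable T) (hCm : Measurable C) (tmax : ℝ)
    (hT : ∀ᵐ ω ∂Q, 0 ≤ T ω ∧ T ω ≤ tmax) (hC : ∀ᵐ ω ∂Q, 0 ≤ C ω)
    (γ : ℝ)
    (hγ : ∫ ω, (T ω - min (T ω) (C ω)) ∂(Q[|{ω | C ω ≤ T ω}]) ≤ γ) :
    ∫ ω, T ω ∂Q ≤
      (∫ ω, T ω ∂(Q[|{ω | C ω ≤ T ω}ᶜ])) * (1 - (Q {ω | C ω ≤ T ω}).toReal)
        + ((∫ ω, min (T ω) (C ω) ∂(Q[|{ω | C ω ≤ T ω}])) + γ)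
            * (Q {ω | C ω ≤ T ω}).toReal := by
  set D : Set Ω := {ω | C ω ≤ T ω}
  have hD : MeasurableSet D := measurableSet_le hCm hTm
  have hTi : Integrable T Q := Integrable.of_bound hTm.aestronglyMeasurable tmax <| by
    filter_upwards [hT] with ω ⟨hT₀, hT₁⟩
    rwa [Real.norm_of_nonneg hT₀]
  have hminTCi : Integrable (fun ω ↦ min (T ω) (C ω)) Q :=
    hTi.mono (hTm.min hCm).aestronglyMeasurable <| by
      filter_upwards [hT, hC] with ω ⟨hT₀, _⟩ hC₀
      rw [Real.norm_of_nonneg hT₀, Real.norm_of_nonneg (le_min hT₀ hC₀)]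
      exact min_le_left _ _
  have hcond : ∫ ω, T ω ∂Q[|D] ≤ (∫ ω, min (T ω) (C ω) ∂Q[|D]) + γ := by
    rw [integral_sub hTi.cond hminTCi.cond] at hγ
    linarith
  calc ∫ ω, T ω ∂Q
      = (∫ ω, T ω ∂Q[|Dᶜ]) * (Q Dᶜ).toReal + (∫ ω, T ω ∂Q[|D]) * (Q D).toReal :=
        integral_eq_integral_cond_compl_mul_add hD hTi
    _ ≤ _ := by
        rw [← measureReal_def, probReal_compl_eq_one_sub hD, measureReal_def]
        gcongr

/-- Case 1, Eq. 6: domain-knowledge upper bound on the CAPO: With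
survival time `0 ≤ T ≤ t_max`, censoring time `C ≥ 0`, `T̃ := min(T, C)`, censoring
event `D := {C ≤ T}` with `0 < Q(D) < 1`, and a real `γ` with
`E_{Q(·|D)}[T − T̃] ≤ γ`, one has
`E_Q[T] ≤ E_{Q(·|Dᶜ)}[T] · (1 − Q(D)) + (E_{Q(·|D)}[T̃] + γ) · Q(D)`,
i.e., `μ(x,a) ≤ μ⁺(x,a) = ν(0,x,a)(1−ξ) + ν̃(1,x,a)ξ + γξ`. -/
theorem capo_domain_knowledge_upper_bound
    {Ω : Type*} [MeasurableSpace Ω] (Q : Measure Ω) [IsProbabilityMeasure Q]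
    (T C : Ω → ℝ) (hTm : Measurable T) (hCm : Measurable C) (tmax : ℝ)
    (hT : ∀ᵐ ω ∂Q, 0 ≤ T ω ∧ T ω ≤ tmax) (hC : ∀ᵐ ω ∂Q, 0 ≤ C ω)
    (hD0 : 0 < Q {ω | C ω ≤ T ω}) (hD1 : Q {ω | C ω ≤ T ω} < 1)
    (γ : ℝ)
    (hγ : ∫ ω, (T ω - min (T ω) (C ω)) ∂(Q[|{ω | C ω ≤ T ω}]) ≤ γ) :
    ∫ ω, T ω ∂Q ≤
      (∫ ω, T ω ∂(Q[|{ω | C ω ≤ T ω}ᶜ])) * (1 - (Q {ω | C ω ≤ T ω}).toReal)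
        + ((∫ ω, min (T ω) (C ω) ∂(Q[|{ω | C ω ≤ T ω}])) + γ)
            * (Q {ω | C ω ≤ T ω}).toReal :=
  capo_domain_knowledge_upper_bound_general Q T C hTm hCm tmax hT hC γ hγ
end

section
/- Let P be a probability measure, T and C real-valued random variables with 0 ≤ T ≤ t_max and 0 ≤ C almost surely, T̃ := min(T, C), D := {C ≤ T}. Let S₁ and S₂ be events (representing {X=x, A=a₁} and {X=x, A=a₂}) with P(Sᵢ) > 0 and 0 < ξᵢ := P(D | Sᵢ) < 1 for i = 1, 2, and let γ₁, γ₂ be real numbers with E[T − T̃ | Sᵢ ∩ D] ≤ γᵢ. Define μ⁻ᵢ := E[T̃ | Sᵢ] and μ⁺ᵢ := E[T | Sᵢ ∩ Dᶜ](1 − ξᵢ) + (E[T̃ | Sᵢ ∩ D] + γᵢ) ξᵢ. Then the treatment-effect contrast τ := E[T | S₁] − E[T | S₂] satisfies μ⁻₁ − μ⁺₂ ≤ τ ≤ μ⁺₁ − μ⁻₂. -/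
open MeasureTheory ProbabilityTheory

section Aux

variable {Ω : Type*} [MeasurableSpace Ω]

lemma integrable_cond_aux (P : Measure Ω) {S : Set Ω} (h0 : P S ≠ 0)
    {f : Ω → ℝ} (hf : Integrable f P) : Integrable f (P[|S]) := by
  rw [ProbabilityTheory.cond]
  exact (hf.restrict).smul_measure (ENNReal.inv_ne_top.mpr h0)

lemma integral_cond_aux (P : Measure Ω) (S : Set Ω) (f : Ω → ℝ) :
    ∫ ω, f ω ∂(P[|S]) = (P S).toReal⁻¹ * ∫ ω in S, f ω ∂P := by
  rw [ProbabilityTheory.cond, integral_smul_measure, ENNReal.toReal_inv, smul_eq_mul]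

lemma cond_split (P : Measure Ω) [IsProbabilityMeasure P] {S D : Set Ω}
    (hS : MeasurableSet S) (hD : MeasurableSet D)
    (ha : P (S ∩ D) ≠ 0) (hb : P (S ∩ Dᶜ) ≠ 0)
    {f : Ω → ℝ} (hf : Integrable f P) :
    ∫ ω, f ω ∂(P[|S]) = (∫ ω, f ω ∂(P[|S ∩ Dᶜ])) * (1 - ((P[|S]) D).toReal)
      + (∫ ω, f ω ∂(P[|S ∩ D])) * ((P[|S]) D).toReal := by
  have hsum : P (S ∩ D) + P (S ∩ Dᶜ) = P S := by
    rw [← Set.diff_eq]; exact measure_inter_add_diff S hD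
  set ar := (P (S ∩ D)).toReal with har
  set br := (P (S ∩ Dᶜ)).toReal with hbr
  set sr := (P S).toReal with hsr
  have hane : P (S ∩ D) ≠ ⊤ := measure_ne_top _ _
  have hbne : P (S ∩ Dᶜ) ≠ ⊤ := measure_ne_top _ _
  have hsne : P S ≠ ⊤ := measure_ne_top _ _
  have hsumr : ar + br = sr := by
    rw [har, hbr, hsr, ← ENNReal.toReal_add hane hbne, hsum]
  have ha0 : 0 < ar := ENNReal.toReal_pos ha hane
  have hb0 : 0 < br := ENNReal.toReal_pos hb hbne
  have hs0 : 0 < sr := by linarith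
  have hξ : ((P[|S]) D).toReal = ar / sr := by
    rw [cond_apply hS, ENNReal.toReal_mul, ENNReal.toReal_inv, har, hsr]
    ring
  have hsplitInt : ∫ ω in S, f ω ∂P = (∫ ω in S ∩ D, f ω ∂P) + ∫ ω in S ∩ Dᶜ, f ω ∂P := by
    calc ∫ ω in S, f ω ∂P = ∫ ω in (S ∩ D) ∪ (S ∩ Dᶜ), f ω ∂P := by
          rw [Set.inter_union_compl]
      _ = (∫ ω in S ∩ D, f ω ∂P) + ∫ ω in S ∩ Dᶜ, f ω ∂P :=
          setIntegral_union ((disjoint_compl_right).mono inf_le_right inf_le_right)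
            (hS.inter hD.compl) (hf.integrableOn) (hf.integrableOn)
  have h1ξ : 1 - ar / sr = br / sr := by
    field_simp
    linarith
  rw [integral_cond_aux, integral_cond_aux, integral_cond_aux, hξ, hsplitInt, h1ξ]
  field_simp
  rw [← hsr, ← har, ← hbr, mul_div_cancel_right₀ _ hs0.ne', mul_div_cancel_right₀ _ ha0.ne',
    mul_div_cancel_right₀ _ hb0.ne']
  ring

lemma key_arm (P : Measure Ω) [IsProbabilityMeasure P]
    (T C : Ω → ℝ) (hTm : Measurable T) (hCm : Measurable C) (tmax : ℝ)
    (hT : ∀ᵐ ω ∂P, 0 ≤ T ω ∧ T ω ≤ tmax) (hC : ∀ᵐ ω ∂P, 0 ≤ C ω)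
    (S : Set Ω) (hSm : MeasurableSet S) (hS : 0 < P S)
    (hξ0 : 0 < (P[|S]) {ω | C ω ≤ T ω}) (hξ1 : (P[|S]) {ω | C ω ≤ T ω} < 1)
    (γ : ℝ)
    (hγ : ∫ ω, (T ω - min (T ω) (C ω)) ∂(P[|S ∩ {ω | C ω ≤ T ω}]) ≤ γ) :
    (∫ ω, min (T ω) (C ω) ∂(P[|S])) ≤ (∫ ω, T ω ∂(P[|S])) ∧
    (∫ ω, T ω ∂(P[|S])) ≤ (∫ ω, T ω ∂(P[|S ∩ {ω | C ω ≤ T ω}ᶜ]))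
        * (1 - ((P[|S]) {ω | C ω ≤ T ω}).toReal)
      + ((∫ ω, min (T ω) (C ω) ∂(P[|S ∩ {ω | C ω ≤ T ω}])) + γ)
        * ((P[|S]) {ω | C ω ≤ T ω}).toReal := by
  set D : Set Ω := {ω | C ω ≤ T ω} with hDdef
  have hD : MeasurableSet D := measurableSet_le hCm hTm
  have hS0 : P S ≠ 0 := hS.ne'
  -- integrability of T and min under P
  have hTb : tmax ∈ Set.Icc 0 tmax → True := fun _ => trivial
  have hTint : Integrable T P := by
    refine ⟨hTm.aestronglyMeasurable, HasFiniteIntegral.of_bounded (C := tmax) ?_⟩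
    filter_upwards [hT] with ω ⟨h1, h2⟩
    rw [Real.norm_eq_abs, abs_le]; constructor <;> linarith
  have hMint : Integrable (fun ω => min (T ω) (C ω)) P := by
    refine ⟨(hTm.min hCm).aestronglyMeasurable, HasFiniteIntegral.of_bounded (C := tmax) ?_⟩
    filter_upwards [hT, hC] with ω ⟨h1, h2⟩ h3
    rw [Real.norm_eq_abs, abs_le]
    refine ⟨by simp only [le_min_iff]; constructor <;> linarith, le_trans (min_le_left _ _) h2⟩
  -- positivity of pieces
  have haD : P (S ∩ D) ≠ 0 := by
    intro h
    rw [cond_apply hSm, h, mul_zero] at hξ0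
    exact lt_irrefl _ hξ0
  have hbD : P (S ∩ Dᶜ) ≠ 0 := by
    intro h
    have hsum : P (S ∩ D) + P (S ∩ Dᶜ) = P S := by
      rw [← Set.diff_eq]; exact measure_inter_add_diff S hD
    rw [h, add_zero] at hsum
    rw [cond_apply hSm, hsum, ENNReal.inv_mul_cancel hS0 (measure_ne_top _ _)] at hξ1
    exact lt_irrefl _ hξ1
  have haD0 : P (S ∩ D) ≠ ⊤ := measure_ne_top _ _
  constructor
  · exact integral_mono (integrable_cond_aux P hS0 hMint) (integrable_cond_aux P hS0 hTint)
      (fun ω => min_le_left _ _)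
  · have hsplit := cond_split P hSm hD haD hbD hTint
    have hDbound : ∫ ω, T ω ∂(P[|S ∩ D])
        ≤ (∫ ω, min (T ω) (C ω) ∂(P[|S ∩ D])) + γ := by
      have hi1 : Integrable T (P[|S ∩ D]) := integrable_cond_aux P haD hTint
      have hi2 : Integrable (fun ω => min (T ω) (C ω)) (P[|S ∩ D]) :=
        integrable_cond_aux P haD hMint
      have := integral_sub hi1 hi2
      rw [this] at hγ
      linarith
    have hξnn : 0 ≤ ((P[|S]) D).toReal := ENNReal.toReal_nonneg
    rw [hsplit]
    have := mul_le_mul_of_nonneg_right hDbound hξnn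
    linarith

end Aux

/-- Theorem 1, domain-knowledge case: With survival time
`0 ≤ T ≤ t_max`, censoring time `C ≥ 0`, `T̃ := min(T, C)`, censoring event
`D := {C ≤ T}`, events `S₁, S₂` with `P(Sᵢ) > 0` and `0 < ξᵢ := P(D | Sᵢ) < 1`,
and reals `γᵢ` with `E[T − T̃ | Sᵢ ∩ D] ≤ γᵢ`, the contrast
`τ := E[T | S₁] − E[T | S₂]` satisfies `μ⁻₁ − μ⁺₂ ≤ τ ≤ μ⁺₁ − μ⁻₂`, where
`μ⁻ᵢ := E[T̃ | Sᵢ]` and `μ⁺ᵢ := E[T | Sᵢ ∩ Dᶜ](1 − ξᵢ) + (E[T̃ | Sᵢ ∩ D] + γᵢ) ξᵢ`. -/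
theorem cate_partial_identification_domain_knowledge
    {Ω : Type*} [MeasurableSpace Ω] (P : Measure Ω) [IsProbabilityMeasure P]
    (T C : Ω → ℝ) (hTm : Measurable T) (hCm : Measurable C) (tmax : ℝ)
    (hT : ∀ᵐ ω ∂P, 0 ≤ T ω ∧ T ω ≤ tmax) (hC : ∀ᵐ ω ∂P, 0 ≤ C ω)
    (S₁ S₂ : Set Ω) (hS₁m : MeasurableSet S₁) (hS₂m : MeasurableSet S₂)
    (hS₁ : 0 < P S₁) (hS₂ : 0 < P S₂)
    (hξ₁0 : 0 < (P[|S₁]) {ω | C ω ≤ T ω}) (hξ₁1 : (P[|S₁]) {ω | C ω ≤ T ω} < 1)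
    (hξ₂0 : 0 < (P[|S₂]) {ω | C ω ≤ T ω}) (hξ₂1 : (P[|S₂]) {ω | C ω ≤ T ω} < 1)
    (γ₁ γ₂ : ℝ)
    (hγ₁ : ∫ ω, (T ω - min (T ω) (C ω)) ∂(P[|S₁ ∩ {ω | C ω ≤ T ω}]) ≤ γ₁)
    (hγ₂ : ∫ ω, (T ω - min (T ω) (C ω)) ∂(P[|S₂ ∩ {ω | C ω ≤ T ω}]) ≤ γ₂) :
    ((∫ ω, min (T ω) (C ω) ∂(P[|S₁]))
        - ((∫ ω, T ω ∂(P[|S₂ ∩ {ω | C ω ≤ T ω}ᶜ]))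
              * (1 - ((P[|S₂]) {ω | C ω ≤ T ω}).toReal)
            + ((∫ ω, min (T ω) (C ω) ∂(P[|S₂ ∩ {ω | C ω ≤ T ω}])) + γ₂)
              * ((P[|S₂]) {ω | C ω ≤ T ω}).toReal)
      ≤ (∫ ω, T ω ∂(P[|S₁])) - ∫ ω, T ω ∂(P[|S₂]))
    ∧ ((∫ ω, T ω ∂(P[|S₁])) - ∫ ω, T ω ∂(P[|S₂])
      ≤ ((∫ ω, T ω ∂(P[|S₁ ∩ {ω | C ω ≤ T ω}ᶜ]))
              * (1 - ((P[|S₁]) {ω | C ω ≤ T ω}).toReal)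
            + ((∫ ω, min (T ω) (C ω) ∂(P[|S₁ ∩ {ω | C ω ≤ T ω}])) + γ₁)
              * ((P[|S₁]) {ω | C ω ≤ T ω}).toReal)
          - ∫ ω, min (T ω) (C ω) ∂(P[|S₂])) := by
  obtain ⟨h1l, h1u⟩ := key_arm P T C hTm hCm tmax hT hC S₁ hS₁m hS₁ hξ₁0 hξ₁1 γ₁ hγ₁
  obtain ⟨h2l, h2u⟩ := key_arm P T C hTm hCm tmax hT hC S₂ hS₂m hS₂ hξ₂0 hξ₂1 γ₂ hγ₂
  constructor <;> linarith
end

section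
/- Let P be a probability measure, T and C real-valued random variables with 0 ≤ T ≤ t_max and 0 ≤ C almost surely, T̃ := min(T, C), D := {C ≤ T}. Let S₁ and S₂ be events with P(Sᵢ) > 0 and 0 < ξᵢ := P(D | Sᵢ) < 1 for i = 1, 2. Define μ⁻ᵢ := E[T̃ | Sᵢ] and μ⁺ᵢ := E[T | Sᵢ ∩ Dᶜ](1 − ξᵢ) + t_max ξᵢ. Then the treatment-effect contrast τ := E[T | S₁] − E[T | S₂] satisfies μ⁻₁ − μ⁺₂ ≤ τ ≤ μ⁺₁ − μ⁻₂. -/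
open MeasureTheory ProbabilityTheory

lemma cond_integral_eq {Ω : Type*} [MeasurableSpace Ω] (P : Measure Ω)
    (S : Set Ω) (f : Ω → ℝ) :
    ∫ ω, f ω ∂(P[|S]) = (P S).toReal⁻¹ * ∫ ω in S, f ω ∂P := by
  rw [show P[|S] = (P S)⁻¹ • P.restrict S from rfl, integral_smul_measure,
    ENNReal.toReal_inv, smul_eq_mul]

lemma one_side {Ω : Type*} [MeasurableSpace Ω] (P : Measure Ω) [IsProbabilityMeasure P]
    (T C : Ω → ℝ) (hTm : Measurable T) (hCm : Measurable C) (tmax : ℝ)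
    (hT : ∀ᵐ ω ∂P, 0 ≤ T ω ∧ T ω ≤ tmax) (hC : ∀ᵐ ω ∂P, 0 ≤ C ω)
    (S : Set Ω) (hSm : MeasurableSet S) (hS : 0 < P S)
    (hξ1 : (P[|S]) {ω | C ω ≤ T ω} < 1) :
    (∫ ω, min (T ω) (C ω) ∂(P[|S])) ≤ ∫ ω, T ω ∂(P[|S]) ∧
    (∫ ω, T ω ∂(P[|S])) ≤ (∫ ω, T ω ∂(P[|S ∩ {ω | C ω ≤ T ω}ᶜ]))
        * (1 - ((P[|S]) {ω | C ω ≤ T ω}).toReal)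
      + tmax * ((P[|S]) {ω | C ω ≤ T ω}).toReal := by
  set D : Set Ω := {ω | C ω ≤ T ω} with hD
  have hDm : MeasurableSet D := measurableSet_le hCm hTm
  have htmax : 0 ≤ tmax := by
    obtain ⟨ω, h0, h1⟩ := hT.exists
    linarith
  -- integrability
  have hTint : Integrable T P := by
    refine (integrable_const tmax).mono' hTm.aestronglyMeasurable ?_
    filter_upwards [hT] with ω ⟨h0, h1⟩
    rw [Real.norm_eq_abs, abs_le]; exact ⟨by linarith, h1⟩
  have hMint : Integrable (fun ω => min (T ω) (C ω)) P := by
    refine (integrable_const tmax).mono' (hTm.min hCm).aestronglyMeasurable ?_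
    filter_upwards [hT, hC] with ω ⟨h0, h1⟩ hc
    rw [Real.norm_eq_abs, abs_le]
    exact ⟨le_min (by linarith) (by linarith), (min_le_left _ _).trans h1⟩
  have hPS0 : P S ≠ 0 := hS.ne'
  have hPSt : (0:ℝ) < (P S).toReal := ENNReal.toReal_pos hPS0 (measure_ne_top _ _)
  -- ξ values
  have hxi : ((P[|S]) D).toReal = (P (S ∩ D)).toReal * ((P S).toReal)⁻¹ := by
    rw [cond_apply hSm, ENNReal.toReal_mul, ENNReal.toReal_inv, mul_comm]
  have hxic : (1 : ℝ) - ((P[|S]) D).toReal = (P (S ∩ Dᶜ)).toReal * ((P S).toReal)⁻¹ := by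
    have hprob : IsProbabilityMeasure (P[|S]) := cond_isProbabilityMeasure hPS0
    have h1 : (P[|S]) Dᶜ = 1 - (P[|S]) D := by
      rw [measure_compl hDm (measure_ne_top _ _), measure_univ]
    have h2 : ((P[|S]) Dᶜ).toReal = 1 - ((P[|S]) D).toReal := by
      rw [h1, ENNReal.toReal_sub_of_le hξ1.le ENNReal.one_ne_top, ENNReal.toReal_one]
    rw [← h2, cond_apply hSm, ENNReal.toReal_mul, ENNReal.toReal_inv, mul_comm]
  -- positivity of P (S ∩ Dᶜ)
  have hPSD0 : P (S ∩ Dᶜ) ≠ 0 := by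
    intro h
    have : (1 : ℝ) - ((P[|S]) D).toReal = 0 := by rw [hxic, h]; simp
    have : ((P[|S]) D).toReal < 1 := by
      have := (ENNReal.toReal_lt_toReal (by finiteness) ENNReal.one_ne_top).2 hξ1
      simpa using this
    linarith
  have hPSDt : (0:ℝ) < (P (S ∩ Dᶜ)).toReal :=
    ENNReal.toReal_pos hPSD0 (measure_ne_top _ _)
  -- split the integral
  have hsplit : ∫ ω in S, T ω ∂P = (∫ ω in S ∩ D, T ω ∂P) + ∫ ω in S ∩ Dᶜ, T ω ∂P := by
    rw [← setIntegral_union (Disjoint.inter_left' _ (Disjoint.inter_right' _ disjoint_compl_right))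
      (hSm.inter hDm.compl) hTint.integrableOn hTint.integrableOn,
      Set.inter_union_compl]
  -- bound on S ∩ D
  have hbound : ∫ ω in S ∩ D, T ω ∂P ≤ tmax * (P (S ∩ D)).toReal := by
    calc ∫ ω in S ∩ D, T ω ∂P ≤ ∫ _ in S ∩ D, tmax ∂P := by
          refine integral_mono_ae hTint.integrableOn (integrable_const _) ?_
          exact ae_restrict_of_ae (hT.mono fun ω h => h.2)
      _ = tmax * (P (S ∩ D)).toReal := by rw [setIntegral_const, smul_eq_mul, mul_comm, measureReal_def]
  -- conditional integral on S ∩ Dᶜ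
  have hcDc : (∫ ω, T ω ∂(P[|S ∩ Dᶜ])) * (P (S ∩ Dᶜ)).toReal = ∫ ω in S ∩ Dᶜ, T ω ∂P := by
    rw [cond_integral_eq]
    field_simp
  constructor
  · rw [cond_integral_eq, cond_integral_eq]
    gcongr _ * ?_
    refine integral_mono_ae hMint.integrableOn hTint.integrableOn ?_
    exact ae_restrict_of_ae (Filter.Eventually.of_forall fun ω => min_le_left _ _)
  · rw [cond_integral_eq, hxic, hxi, hsplit]
    have h1 : (∫ ω, T ω ∂(P[|S ∩ Dᶜ])) * ((P (S ∩ Dᶜ)).toReal * ((P S).toReal)⁻¹)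
        = (∫ ω in S ∩ Dᶜ, T ω ∂P) * ((P S).toReal)⁻¹ := by
      rw [← mul_assoc, hcDc]
    rw [h1]
    have hinv : (0:ℝ) < ((P S).toReal)⁻¹ := by positivity
    nlinarith [hbound]

/-- Theorem 1, conservative case: With survival time
`0 ≤ T ≤ t_max`, censoring time `C ≥ 0`, `T̃ := min(T, C)`, censoring event
`D := {C ≤ T}`, and events `S₁, S₂` with `P(Sᵢ) > 0` and `0 < ξᵢ := P(D | Sᵢ) < 1`,
the contrast `τ := E[T | S₁] − E[T | S₂]` satisfies `μ⁻₁ − μ⁺₂ ≤ τ ≤ μ⁺₁ − μ⁻₂`,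
where `μ⁻ᵢ := E[T̃ | Sᵢ]` and `μ⁺ᵢ := E[T | Sᵢ ∩ Dᶜ](1 − ξᵢ) + t_max ξᵢ`. -/
theorem cate_partial_identification_conservative
    {Ω : Type*} [MeasurableSpace Ω] (P : Measure Ω) [IsProbabilityMeasure P]
    (T C : Ω → ℝ) (hTm : Measurable T) (hCm : Measurable C) (tmax : ℝ)
    (hT : ∀ᵐ ω ∂P, 0 ≤ T ω ∧ T ω ≤ tmax) (hC : ∀ᵐ ω ∂P, 0 ≤ C ω)
    (S₁ S₂ : Set Ω) (hS₁m : MeasurableSet S₁) (hS₂m : MeasurableSet S₂)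
    (hS₁ : 0 < P S₁) (hS₂ : 0 < P S₂)
    (hξ₁0 : 0 < (P[|S₁]) {ω | C ω ≤ T ω}) (hξ₁1 : (P[|S₁]) {ω | C ω ≤ T ω} < 1)
    (hξ₂0 : 0 < (P[|S₂]) {ω | C ω ≤ T ω}) (hξ₂1 : (P[|S₂]) {ω | C ω ≤ T ω} < 1) :
    ((∫ ω, min (T ω) (C ω) ∂(P[|S₁]))
        - ((∫ ω, T ω ∂(P[|S₂ ∩ {ω | C ω ≤ T ω}ᶜ]))
              * (1 - ((P[|S₂]) {ω | C ω ≤ T ω}).toReal)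
            + tmax * ((P[|S₂]) {ω | C ω ≤ T ω}).toReal)
      ≤ (∫ ω, T ω ∂(P[|S₁])) - ∫ ω, T ω ∂(P[|S₂]))
    ∧ ((∫ ω, T ω ∂(P[|S₁])) - ∫ ω, T ω ∂(P[|S₂])
      ≤ ((∫ ω, T ω ∂(P[|S₁ ∩ {ω | C ω ≤ T ω}ᶜ]))
              * (1 - ((P[|S₁]) {ω | C ω ≤ T ω}).toReal)
            + tmax * ((P[|S₁]) {ω | C ω ≤ T ω}).toReal)
          - ∫ ω, min (T ω) (C ω) ∂(P[|S₂])) := by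
  obtain ⟨h1l, h1u⟩ := one_side P T C hTm hCm tmax hT hC S₁ hS₁m hS₁ hξ₁1
  obtain ⟨h2l, h2u⟩ := one_side P T C hTm hCm tmax hT hC S₂ hS₂m hS₂ hξ₂1
  constructor <;> linarith
end

section
/- Let Q be a probability measure (representing the conditional distribution given covariates X = x), let T̃ be a bounded real-valued random variable, and let E_a and D be events with π := Q(E_a) ∈ (0,1), Q(E_a ∩ D) > 0 and Q(E_a ∩ Dᶜ) > 0; set ξ := Q(D | E_a), ν(0) := E[T̃ | E_a ∩ Dᶜ] and ν(1) := E[T̃ | E_a ∩ D]. Given real estimates π̂ ∈ (0,1), ξ̂, ν̂0, ν̂1, define the lower-bound pseudo-outcome random variable φ⁻ := (1_{E_a ∩ Dᶜ}/π̂)(T̃ − ν̂0) + (ν̂0/π̂)·1_{E_a}·(1_{Dᶜ} − (1 − ξ̂)) + ν̂0(1 − ξ̂) + (1_{E_a ∩ D}/π̂)(T̃ − ν̂1) + (ν̂1/π̂)·1_{E_a}·(1_D − ξ̂) + ν̂1 ξ̂. If either (1) π̂ = π, or (2) ν̂0 = ν(0), ν̂1 = ν(1) and ξ̂ = ξ,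 then E_Q[φ⁻] = ν(0)(1 − ξ) + ν(1) ξ = μ⁻, the lower bound on the CAPO. In particular the pseudo-outcome is doubly robust. -/
open MeasureTheory ProbabilityTheory

/-- Theorem 2: consistency and double robustness of the SurvB-learner's
lower-bound pseudo-outcome, Eq. 12: With `π := Q(E_a) ∈ (0,1)`, `ξ := Q(D | E_a)`,
`ν(0) := E[T̃ | E_a ∩ Dᶜ]`, `ν(1) := E[T̃ | E_a ∩ D]`, and estimates
`π̂ ∈ (0,1), ξ̂, ν̂0, ν̂1`, if either `π̂ = π`, or `ν̂0 = ν(0)`, `ν̂1 = ν(1)` and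
`ξ̂ = ξ`, then `E_Q[φ⁻] = ν(0)(1 − ξ) + ν(1) ξ = μ⁻`. -/
theorem survb_lower_pseudo_outcome_doubly_robust
    {Ω : Type*} [MeasurableSpace Ω] (Q : Measure Ω) [IsProbabilityMeasure Q]
    (Ttil : Ω → ℝ) (hTm : Measurable Ttil) (M : ℝ) (hbd : ∀ ω, |Ttil ω| ≤ M)
    (Ea D : Set Ω) (hEa : MeasurableSet Ea) (hD : MeasurableSet D)
    (hπ0 : 0 < Q Ea) (hπ1 : Q Ea < 1)
    (hED : 0 < Q (Ea ∩ D)) (hEDc : 0 < Q (Ea ∩ Dᶜ))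
    (πhat ξhat ν0hat ν1hat : ℝ) (hπhat0 : 0 < πhat) (hπhat1 : πhat < 1)
    (hrobust :
      πhat = (Q Ea).toReal ∨
      (ν0hat = ∫ ω, Ttil ω ∂(Q[|Ea ∩ Dᶜ]) ∧
       ν1hat = ∫ ω, Ttil ω ∂(Q[|Ea ∩ D]) ∧
       ξhat = ((Q[|Ea]) D).toReal)) :
    ∫ ω, (Set.indicator (Ea ∩ Dᶜ) (fun _ => (1:ℝ)) ω / πhat * (Ttil ω - ν0hat)
        + ν0hat / πhat * Set.indicator Ea (fun _ => (1:ℝ)) ω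
            * (Set.indicator Dᶜ (fun _ => (1:ℝ)) ω - (1 - ξhat))
        + ν0hat * (1 - ξhat)
        + Set.indicator (Ea ∩ D) (fun _ => (1:ℝ)) ω / πhat * (Ttil ω - ν1hat)
        + ν1hat / πhat * Set.indicator Ea (fun _ => (1:ℝ)) ω
            * (Set.indicator D (fun _ => (1:ℝ)) ω - ξhat)
        + ν1hat * ξhat) ∂Q
      = (∫ ω, Ttil ω ∂(Q[|Ea ∩ Dᶜ])) * (1 - ((Q[|Ea]) D).toReal)
        + (∫ ω, Ttil ω ∂(Q[|Ea ∩ D])) * ((Q[|Ea]) D).toReal := by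
  have hmDc : MeasurableSet (Ea ∩ Dᶜ) := hEa.inter hD.compl
  have hmD : MeasurableSet (Ea ∩ D) := hEa.inter hD
  have hTint : Integrable Ttil Q := by
    refine (integrable_const M).mono' hTm.aestronglyMeasurable ?_
    exact ae_of_all _ fun ω => by simpa using hbd ω
  obtain ⟨J0, hJ0⟩ : ∃ x, (∫ ω in Ea ∩ Dᶜ, Ttil ω ∂Q) = x := ⟨_, rfl⟩
  obtain ⟨J1, hJ1⟩ : ∃ x, (∫ ω in Ea ∩ D, Ttil ω ∂Q) = x := ⟨_, rfl⟩
  obtain ⟨p, hp⟩ : ∃ x, (Q Ea).toReal = x := ⟨_, rfl⟩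
  obtain ⟨pD, hpD⟩ : ∃ x, (Q (Ea ∩ D)).toReal = x := ⟨_, rfl⟩
  obtain ⟨pDc, hpDc⟩ : ∃ x, (Q (Ea ∩ Dᶜ)).toReal = x := ⟨_, rfl⟩
  have hpD0 : 0 < pD := hpD ▸ ENNReal.toReal_pos hED.ne' (measure_ne_top Q _)
  have hpDc0 : 0 < pDc := hpDc ▸ ENNReal.toReal_pos hEDc.ne' (measure_ne_top Q _)
  have hp0 : 0 < p := hp ▸ ENNReal.toReal_pos hπ0.ne' (measure_ne_top Q _)
  have hsplit : p = pD + pDc := by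
    rw [← hp, ← hpD, ← hpDc,
      ← ENNReal.toReal_add (measure_ne_top Q _) (measure_ne_top Q _)]
    congr 1
    rw [← measure_inter_add_diff Ea hD, Set.diff_eq]
  have hξ : ((Q[|Ea]) D).toReal = pD / p := by
    rw [cond_apply hEa Q D, ENNReal.toReal_mul, ENNReal.toReal_inv, hp, hpD, div_eq_inv_mul]
  have hν0 : (∫ ω, Ttil ω ∂(Q[|Ea ∩ Dᶜ])) = pDc⁻¹ * J0 := by
    rw [ProbabilityTheory.cond, integral_smul_measure, ENNReal.toReal_inv, smul_eq_mul,
      hJ0, hpDc]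
  have hν1 : (∫ ω, Ttil ω ∂(Q[|Ea ∩ D])) = pD⁻¹ * J1 := by
    rw [ProbabilityTheory.cond, integral_smul_measure, ENNReal.toReal_inv, smul_eq_mul,
      hJ1, hpD]
  set m : ℝ := ν0hat * (1 - ξhat) + ν1hat * ξhat with hmdef
  set c : ℝ := -(m / πhat) with hcdef
  have hfun : ∀ ω, (Set.indicator (Ea ∩ Dᶜ) (fun _ => (1:ℝ)) ω / πhat * (Ttil ω - ν0hat)
        + ν0hat / πhat * Set.indicator Ea (fun _ => (1:ℝ)) ω
            * (Set.indicator Dᶜ (fun _ => (1:ℝ)) ω - (1 - ξhat))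
        + ν0hat * (1 - ξhat)
        + Set.indicator (Ea ∩ D) (fun _ => (1:ℝ)) ω / πhat * (Ttil ω - ν1hat)
        + ν1hat / πhat * Set.indicator Ea (fun _ => (1:ℝ)) ω
            * (Set.indicator D (fun _ => (1:ℝ)) ω - ξhat)
        + ν1hat * ξhat)
      = (πhat⁻¹ * Set.indicator (Ea ∩ Dᶜ) Ttil ω
        + πhat⁻¹ * Set.indicator (Ea ∩ D) Ttil ω
        + c * Set.indicator (Ea ∩ Dᶜ) (fun _ => (1:ℝ)) ω
        + c * Set.indicator (Ea ∩ D) (fun _ => (1:ℝ)) ω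
        + m) := by
    intro ω
    by_cases h1 : ω ∈ Ea <;> by_cases h2 : ω ∈ D <;>
      simp [Set.indicator_apply, h1, h2, hcdef, hmdef] <;> ring
  have A : Integrable (fun ω => πhat⁻¹ * Set.indicator (Ea ∩ Dᶜ) Ttil ω) Q :=
    (hTint.indicator hmDc).const_mul _
  have B : Integrable (fun ω => πhat⁻¹ * Set.indicator (Ea ∩ D) Ttil ω) Q :=
    (hTint.indicator hmD).const_mul _
  have C : Integrable (fun ω => c * Set.indicator (Ea ∩ Dᶜ) (fun _ => (1:ℝ)) ω) Q :=
    ((integrable_const (1:ℝ)).indicator hmDc).const_mul _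
  have Dd : Integrable (fun ω => c * Set.indicator (Ea ∩ D) (fun _ => (1:ℝ)) ω) Q :=
    ((integrable_const (1:ℝ)).indicator hmD).const_mul _
  have AB : Integrable (fun ω => πhat⁻¹ * Set.indicator (Ea ∩ Dᶜ) Ttil ω
      + πhat⁻¹ * Set.indicator (Ea ∩ D) Ttil ω) Q := A.add B
  have ABC : Integrable (fun ω => πhat⁻¹ * Set.indicator (Ea ∩ Dᶜ) Ttil ω
      + πhat⁻¹ * Set.indicator (Ea ∩ D) Ttil ω
      + c * Set.indicator (Ea ∩ Dᶜ) (fun _ => (1:ℝ)) ω) Q := AB.add C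
  have ABCD : Integrable (fun ω => πhat⁻¹ * Set.indicator (Ea ∩ Dᶜ) Ttil ω
      + πhat⁻¹ * Set.indicator (Ea ∩ D) Ttil ω
      + c * Set.indicator (Ea ∩ Dᶜ) (fun _ => (1:ℝ)) ω
      + c * Set.indicator (Ea ∩ D) (fun _ => (1:ℝ)) ω) Q := ABC.add Dd
  have hind1 : ∀ (s : Set Ω), MeasurableSet s →
      ∫ ω, Set.indicator s (fun _ => (1:ℝ)) ω ∂Q = (Q s).toReal := by
    intro s hs
    rw [integral_indicator hs]
    simp
    rfl
  have hval : (∫ ω, (Set.indicator (Ea ∩ Dᶜ) (fun _ => (1:ℝ)) ω / πhat * (Ttil ω - ν0hat)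
        + ν0hat / πhat * Set.indicator Ea (fun _ => (1:ℝ)) ω
            * (Set.indicator Dᶜ (fun _ => (1:ℝ)) ω - (1 - ξhat))
        + ν0hat * (1 - ξhat)
        + Set.indicator (Ea ∩ D) (fun _ => (1:ℝ)) ω / πhat * (Ttil ω - ν1hat)
        + ν1hat / πhat * Set.indicator Ea (fun _ => (1:ℝ)) ω
            * (Set.indicator D (fun _ => (1:ℝ)) ω - ξhat)
        + ν1hat * ξhat) ∂Q)
      = πhat⁻¹ * J0 + πhat⁻¹ * J1 + c * pDc + c * pD + m := by
    simp_rw [hfun]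
    rw [integral_add ABCD (integrable_const m), integral_add ABC Dd, integral_add AB C,
        integral_add A B, integral_const_mul, integral_const_mul, integral_const_mul,
        integral_const_mul, integral_indicator hmDc, integral_indicator hmD,
        hind1 _ hmDc, hind1 _ hmD, hJ0, hJ1, hpD, hpDc]
    simp
  rw [hval, hν0, hν1, hξ]
  have hπne : πhat ≠ 0 := hπhat0.ne'
  have hsum0 : pD + pDc ≠ 0 := by positivity
  rcases hrobust with h1 | ⟨h2a, h2b, h2c⟩
  · rw [hp] at h1
    rw [hcdef, hmdef, h1, hsplit]
    field_simp
    ring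
  · rw [hν0] at h2a
    rw [hν1] at h2b
    rw [hξ] at h2c
    rw [hcdef, hmdef, h2a, h2b, h2c, hsplit]
    field_simp
    ring
end

section
/- Let Q be a probability measure (representing the conditional distribution given covariates X = x), let T̃ be a bounded real-valued random variable, and let E_a and D be events with π := Q(E_a) ∈ (0,1), Q(E_a ∩ D) > 0 and Q(E_a ∩ Dᶜ) > 0; set ξ := Q(D | E_a), ν(0) := E[T̃ | E_a ∩ Dᶜ] and ν(1) := E[T̃ | E_a ∩ D]. Given real estimates π̂ ∈ (0,1), ξ̂, ν̂0, ν̂1 and a real sensitivity value γ, define the domain-knowledge upper-bound pseudo-outcome φ⁺ := (1_{E_a ∩ Dᶜ}/π̂)(T̃ − ν̂0) + (ν̂0/π̂)·1_{E_a}·(1_{Dᶜ} − (1 − ξ̂)) + ν̂0(1 − ξ̂) + (1_{E_a ∩ D}/π̂)(T̃ − ν̂1) + (ν̂1/π̂)·1_{E_a}·(1_D − ξ̂) + ν̂1 ξ̂ + (γ/π̂)·1_{E_a}·(1_D − ξ̂) + γ ξ̂. If either (1) π̂ = π, or (2) ν̂0 = ν(0), ν̂1 = ν(1) and ξ̂ =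 ξ, then E_Q[φ⁺] = ν(0)(1 − ξ) + ν(1) ξ + γ ξ = μ⁺, the domain-knowledge upper bound on the CAPO. -/
open MeasureTheory ProbabilityTheory

/-- Theorem 2: consistency and double robustness of the SurvB-learner's
domain-knowledge upper-bound pseudo-outcome, Eq. 13: With `π := Q(E_a) ∈ (0,1)`,
`ξ := Q(D | E_a)`, `ν(0) := E[T̃ | E_a ∩ Dᶜ]`, `ν(1) := E[T̃ | E_a ∩ D]`, estimates
`π̂ ∈ (0,1), ξ̂, ν̂0, ν̂1`, and a sensitivity value `γ`, if either `π̂ = π`, or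
`ν̂0 = ν(0)`, `ν̂1 = ν(1)` and `ξ̂ = ξ`, then
`E_Q[φ⁺] = ν(0)(1 − ξ) + ν(1) ξ + γ ξ = μ⁺`. -/
theorem survb_domain_knowledge_upper_pseudo_outcome_doubly_robust
    {Ω : Type*} [MeasurableSpace Ω] (Q : Measure Ω) [IsProbabilityMeasure Q]
    (Ttil : Ω → ℝ) (hTm : Measurable Ttil) (M : ℝ) (hbd : ∀ ω, |Ttil ω| ≤ M)
    (Ea D : Set Ω) (hEa : MeasurableSet Ea) (hD : MeasurableSet D)
    (hπ0 : 0 < Q Ea) (hπ1 : Q Ea < 1)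
    (hED : 0 < Q (Ea ∩ D)) (hEDc : 0 < Q (Ea ∩ Dᶜ))
    (πhat ξhat ν0hat ν1hat γ : ℝ) (hπhat0 : 0 < πhat) (hπhat1 : πhat < 1)
    (hrobust :
      πhat = (Q Ea).toReal ∨
      (ν0hat = ∫ ω, Ttil ω ∂(Q[|Ea ∩ Dᶜ]) ∧
       ν1hat = ∫ ω, Ttil ω ∂(Q[|Ea ∩ D]) ∧
       ξhat = ((Q[|Ea]) D).toReal)) :
    ∫ ω, (Set.indicator (Ea ∩ Dᶜ) (fun _ => (1:ℝ)) ω / πhat * (Ttil ω - ν0hat)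
        + ν0hat / πhat * Set.indicator Ea (fun _ => (1:ℝ)) ω
            * (Set.indicator Dᶜ (fun _ => (1:ℝ)) ω - (1 - ξhat))
        + ν0hat * (1 - ξhat)
        + Set.indicator (Ea ∩ D) (fun _ => (1:ℝ)) ω / πhat * (Ttil ω - ν1hat)
        + ν1hat / πhat * Set.indicator Ea (fun _ => (1:ℝ)) ω
            * (Set.indicator D (fun _ => (1:ℝ)) ω - ξhat)
        + ν1hat * ξhat
        + γ / πhat * Set.indicator Ea (fun _ => (1:ℝ)) ω
            * (Set.indicator D (fun _ => (1:ℝ)) ω - ξhat)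
        + γ * ξhat) ∂Q
      = (∫ ω, Ttil ω ∂(Q[|Ea ∩ Dᶜ])) * (1 - ((Q[|Ea]) D).toReal)
        + (∫ ω, Ttil ω ∂(Q[|Ea ∩ D])) * ((Q[|Ea]) D).toReal
        + γ * ((Q[|Ea]) D).toReal := by
  classical
  set p : ℝ := (Q Ea).toReal with hpdef
  set qD : ℝ := (Q (Ea ∩ D)).toReal with hqDdef
  set qDc : ℝ := (Q (Ea ∩ Dᶜ)).toReal with hqDcdef
  set ν0 : ℝ := ∫ ω, Ttil ω ∂(Q[|Ea ∩ Dᶜ]) with hν0def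
  set ν1 : ℝ := ∫ ω, Ttil ω ∂(Q[|Ea ∩ D]) with hν1def
  have hp_pos : 0 < p := ENNReal.toReal_pos hπ0.ne' (measure_ne_top _ _)
  have hqD_pos : 0 < qD := ENNReal.toReal_pos hED.ne' (measure_ne_top _ _)
  have hqDc_pos : 0 < qDc := ENNReal.toReal_pos hEDc.ne' (measure_ne_top _ _)
  have hmED : MeasurableSet (Ea ∩ D) := hEa.inter hD
  have hmEDc : MeasurableSet (Ea ∩ Dᶜ) := hEa.inter hD.compl
  -- p = qD + qDc
  have hsplit : p = qD + qDc := by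
    have h0 : Q (Ea ∩ D) + Q (Ea ∩ Dᶜ) = Q Ea := by
      rw [← Set.diff_eq]; exact measure_inter_add_diff Ea hD
    rw [hpdef, ← h0, ENNReal.toReal_add (measure_ne_top _ _) (measure_ne_top _ _)]
  -- conditional probability as ratio
  have hξ : ((Q[|Ea]) D).toReal = p⁻¹ * qD := by
    rw [cond_apply hEa, ENNReal.toReal_mul, ENNReal.toReal_inv]
  -- conditional expectations as normalized set integrals
  have hν0' : ν0 = qDc⁻¹ * ∫ ω in Ea ∩ Dᶜ, Ttil ω ∂Q := by
    rw [hν0def]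
    simp only [ProbabilityTheory.cond, integral_smul_measure, ENNReal.toReal_inv,
      smul_eq_mul, hqDcdef]
  have hν1' : ν1 = qD⁻¹ * ∫ ω in Ea ∩ D, Ttil ω ∂Q := by
    rw [hν1def]
    simp only [ProbabilityTheory.cond, integral_smul_measure, ENNReal.toReal_inv,
      smul_eq_mul, hqDdef]
  have hI1 : ∫ ω in Ea ∩ Dᶜ, Ttil ω ∂Q = qDc * ν0 := by
    rw [hν0', ← mul_assoc, mul_inv_cancel₀ hqDc_pos.ne', one_mul]
  have hI2 : ∫ ω in Ea ∩ D, Ttil ω ∂Q = qD * ν1 := by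
    rw [hν1', ← mul_assoc, mul_inv_cancel₀ hqD_pos.ne', one_mul]
  -- integrability
  have hTint : Integrable Ttil Q :=
    (integrable_const M).mono' hTm.aestronglyMeasurable (Filter.Eventually.of_forall hbd)
  have int1 : Integrable ((Ea ∩ Dᶜ).indicator Ttil) Q := hTint.indicator hmEDc
  have int2 : Integrable ((Ea ∩ D).indicator Ttil) Q := hTint.indicator hmED
  have int3 : Integrable ((Ea ∩ Dᶜ).indicator (fun _ => (1:ℝ))) Q :=
    (integrable_const (1:ℝ)).indicator hmEDc
  have int4 : Integrable ((Ea ∩ D).indicator (fun _ => (1:ℝ))) Q :=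
    (integrable_const (1:ℝ)).indicator hmED
  -- coefficients
  set c1 : ℝ := πhat⁻¹ with hc1
  set cA : ℝ := (-ν0hat + ν0hat * ξhat - ν1hat * ξhat - γ * ξhat) / πhat with hcA
  set cB : ℝ := (-ν0hat * (1 - ξhat) - ν1hat * ξhat + γ * (1 - ξhat)) / πhat with hcB
  set c0 : ℝ := ν0hat * (1 - ξhat) + ν1hat * ξhat + γ * ξhat with hc0
  -- pointwise rewriting of the pseudo-outcome
  have hpt : ∀ ω,
      (Set.indicator (Ea ∩ Dᶜ) (fun _ => (1:ℝ)) ω / πhat * (Ttil ω - ν0hat)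
        + ν0hat / πhat * Set.indicator Ea (fun _ => (1:ℝ)) ω
            * (Set.indicator Dᶜ (fun _ => (1:ℝ)) ω - (1 - ξhat))
        + ν0hat * (1 - ξhat)
        + Set.indicator (Ea ∩ D) (fun _ => (1:ℝ)) ω / πhat * (Ttil ω - ν1hat)
        + ν1hat / πhat * Set.indicator Ea (fun _ => (1:ℝ)) ω
            * (Set.indicator D (fun _ => (1:ℝ)) ω - ξhat)
        + ν1hat * ξhat
        + γ / πhat * Set.indicator Ea (fun _ => (1:ℝ)) ω
            * (Set.indicator D (fun _ => (1:ℝ)) ω - ξhat)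
        + γ * ξhat)
      = c1 * (Ea ∩ Dᶜ).indicator Ttil ω + c1 * (Ea ∩ D).indicator Ttil ω
        + cA * (Ea ∩ Dᶜ).indicator (fun _ => (1:ℝ)) ω
        + cB * (Ea ∩ D).indicator (fun _ => (1:ℝ)) ω + c0 := by
    intro ω
    rw [hc1, hcA, hcB, hc0]
    by_cases h1 : ω ∈ Ea <;> by_cases h2 : ω ∈ D <;>
      simp [Set.indicator_apply, h1, h2] <;> ring
  simp only [hpt]
  -- compute the integral of the rewritten function
  have h1' := int1.const_mul c1
  have h2' := int2.const_mul c1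
  have h3' := int3.const_mul cA
  have h4' := int4.const_mul cB
  have h12 : Integrable (fun ω => c1 * (Ea ∩ Dᶜ).indicator Ttil ω
      + c1 * (Ea ∩ D).indicator Ttil ω) Q := by exact h1'.add h2'
  have h123 : Integrable (fun ω => c1 * (Ea ∩ Dᶜ).indicator Ttil ω
      + c1 * (Ea ∩ D).indicator Ttil ω
      + cA * (Ea ∩ Dᶜ).indicator (fun _ => (1:ℝ)) ω) Q := by exact h12.add h3'
  have h1234 : Integrable (fun ω => c1 * (Ea ∩ Dᶜ).indicator Ttil ω
      + c1 * (Ea ∩ D).indicator Ttil ω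
      + cA * (Ea ∩ Dᶜ).indicator (fun _ => (1:ℝ)) ω
      + cB * (Ea ∩ D).indicator (fun _ => (1:ℝ)) ω) Q := by exact h123.add h4'
  rw [integral_add h1234 (integrable_const c0),
      integral_add h123 h4',
      integral_add h12 h3',
      integral_add h1' h2',
      integral_const_mul, integral_const_mul, integral_const_mul, integral_const_mul,
      integral_const, integral_indicator hmEDc, integral_indicator hmED,
      integral_indicator_const _ hmEDc, integral_indicator_const _ hmED,
      hI1, hI2]
  simp only [measureReal_def, measure_univ, ENNReal.toReal_one, one_smul, smul_eq_mul, mul_one,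
    ← hqDdef, ← hqDcdef, hξ]
  rw [hc1, hcA, hcB, hc0]
  rcases hrobust with hcase | ⟨hn0, hn1, hxh⟩
  · -- π̂ correctly specified
    rw [hcase, hsplit]
    have hne : qD + qDc ≠ 0 := by positivity
    field_simp
    ring
  · -- outcome/censoring models correctly specified
    rw [hn0, hn1, hxh, hξ, hsplit]
    have hne : qD + qDc ≠ 0 := by positivity
    field_simp
    ring
end

section
/- Let Q be a probability measure (representing the conditional distribution given covariates X = x), let T̃ be a bounded real-valued random variable, and let E_a and D be events with π := Q(E_a) ∈ (0,1), Q(E_a ∩ D) > 0 and Q(E_a ∩ Dᶜ) > 0; set ξ := Q(D | E_a) and ν(0) := E[T̃ | E_a ∩ Dᶜ]. Given real estimates π̂ ∈ (0,1), ξ̂, ν̂0 and a real constant t_max, define the conservative upper-bound pseudo-outcome φ⁺ := (1_{E_a ∩ Dᶜ}/π̂)(T̃ − ν̂0) + (ν̂0/π̂)·1_{E_a}·(1_{Dᶜ} − (1 − ξ̂)) + ν̂0(1 − ξ̂) + (t_max/π̂)·1_{E_a}·(1_D − ξ̂) + t_max ξ̂. If either (1) π̂ = π, or (2) ν̂0 =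 ν(0) and ξ̂ = ξ, then E_Q[φ⁺] = ν(0)(1 − ξ) + t_max ξ = μ⁺, the conservative upper bound on the CAPO. -/
open MeasureTheory ProbabilityTheory

/-- Theorem 2: consistency and double robustness of the SurvB-learner's
conservative upper-bound pseudo-outcome, Eq. 14: With `π := Q(E_a) ∈ (0,1)`,
`ξ := Q(D | E_a)`, `ν(0) := E[T̃ | E_a ∩ Dᶜ]`, estimates `π̂ ∈ (0,1), ξ̂, ν̂0`, and a
constant `t_max`, if either `π̂ = π`, or `ν̂0 = ν(0)` and `ξ̂ = ξ`, then
`E_Q[φ⁺] = ν(0)(1 − ξ) + t_max ξ = μ⁺`. -/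
theorem survb_conservative_upper_pseudo_outcome_doubly_robust
    {Ω : Type*} [MeasurableSpace Ω] (Q : Measure Ω) [IsProbabilityMeasure Q]
    (Ttil : Ω → ℝ) (hTm : Measurable Ttil) (M : ℝ) (hbd : ∀ ω, |Ttil ω| ≤ M)
    (Ea D : Set Ω) (hEa : MeasurableSet Ea) (hD : MeasurableSet D)
    (hπ0 : 0 < Q Ea) (hπ1 : Q Ea < 1)
    (hED : 0 < Q (Ea ∩ D)) (hEDc : 0 < Q (Ea ∩ Dᶜ))
    (πhat ξhat ν0hat tmax : ℝ) (hπhat0 : 0 < πhat) (hπhat1 : πhat < 1)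
    (hrobust :
      πhat = (Q Ea).toReal ∨
      (ν0hat = ∫ ω, Ttil ω ∂(Q[|Ea ∩ Dᶜ]) ∧
       ξhat = ((Q[|Ea]) D).toReal)) :
    ∫ ω, (Set.indicator (Ea ∩ Dᶜ) (fun _ => (1:ℝ)) ω / πhat * (Ttil ω - ν0hat)
        + ν0hat / πhat * Set.indicator Ea (fun _ => (1:ℝ)) ω
            * (Set.indicator Dᶜ (fun _ => (1:ℝ)) ω - (1 - ξhat))
        + ν0hat * (1 - ξhat)
        + tmax / πhat * Set.indicator Ea (fun _ => (1:ℝ)) ω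
            * (Set.indicator D (fun _ => (1:ℝ)) ω - ξhat)
        + tmax * ξhat) ∂Q
      = (∫ ω, Ttil ω ∂(Q[|Ea ∩ Dᶜ])) * (1 - ((Q[|Ea]) D).toReal)
        + tmax * ((Q[|Ea]) D).toReal := by
  have hs : MeasurableSet (Ea ∩ Dᶜ) := hEa.inter hD.compl
  have hsd : MeasurableSet (Ea ∩ D) := hEa.inter hD
  -- real-valued quantities
  set P : ℝ := (Q Ea).toReal with hPdef
  set p : ℝ := (Q (Ea ∩ D)).toReal with hpdef
  set q : ℝ := (Q (Ea ∩ Dᶜ)).toReal with hqdef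
  set I : ℝ := ∫ ω in Ea ∩ Dᶜ, Ttil ω ∂Q with hIdef
  have hq0 : 0 < q := ENNReal.toReal_pos hEDc.ne' (measure_ne_top _ _)
  have hp0 : 0 < p := ENNReal.toReal_pos hED.ne' (measure_ne_top _ _)
  have hP0 : 0 < P := ENNReal.toReal_pos hπ0.ne' (measure_ne_top _ _)
  have hPpq : P = p + q := by
    rw [hPdef, hpdef, hqdef, ← ENNReal.toReal_add (measure_ne_top _ _) (measure_ne_top _ _)]
    congr 1
    rw [← measure_inter_add_diff Ea hD, Set.diff_eq]
  have hν0 : (∫ ω, Ttil ω ∂(Q[|Ea ∩ Dᶜ])) = q⁻¹ * I := by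
    rw [ProbabilityTheory.cond, integral_smul_measure, ENNReal.toReal_inv]
    rfl
  have hξ : ((Q[|Ea]) D).toReal = P⁻¹ * p := by
    rw [ProbabilityTheory.cond_apply hEa, ENNReal.toReal_mul, ENNReal.toReal_inv]
  -- integrability of Ttil
  have hTint : Integrable Ttil Q := by
    refine (integrable_const M).mono' hTm.aestronglyMeasurable (ae_of_all _ fun ω => ?_)
    simpa using hbd ω
  -- rewrite the integrand as a sum of indicators
  have hfg : (fun ω => Set.indicator (Ea ∩ Dᶜ) (fun _ => (1:ℝ)) ω / πhat * (Ttil ω - ν0hat)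
        + ν0hat / πhat * Set.indicator Ea (fun _ => (1:ℝ)) ω
            * (Set.indicator Dᶜ (fun _ => (1:ℝ)) ω - (1 - ξhat))
        + ν0hat * (1 - ξhat)
        + tmax / πhat * Set.indicator Ea (fun _ => (1:ℝ)) ω
            * (Set.indicator D (fun _ => (1:ℝ)) ω - ξhat)
        + tmax * ξhat)
      = fun ω => Set.indicator (Ea ∩ Dᶜ) (fun ω => Ttil ω / πhat) ω
        + Set.indicator (Ea ∩ D) (fun _ => tmax / πhat) ω
        + Set.indicator Ea (fun _ => -(ν0hat * (1 - ξhat) + tmax * ξhat) / πhat) ω + (ν0hat * (1 - ξhat) + tmax * ξhat) := by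
    funext ω
    by_cases h1 : ω ∈ Ea <;> by_cases h2 : ω ∈ D <;>
      simp [Set.indicator_apply, h1, h2] <;> ring
  have hint1 : Integrable ((Ea ∩ Dᶜ).indicator (fun ω => Ttil ω / πhat)) Q :=
    (hTint.div_const πhat).indicator hs
  have hint2 : Integrable ((Ea ∩ D).indicator (fun _ => tmax / πhat)) Q :=
    (integrable_const _).indicator hsd
  have hint3 : Integrable (Ea.indicator (fun _ => -(ν0hat * (1 - ξhat) + tmax * ξhat) / πhat)) Q :=
    (integrable_const _).indicator hEa
  have hint12 : Integrable (fun ω => (Ea ∩ Dᶜ).indicator (fun ω => Ttil ω / πhat) ω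
      + (Ea ∩ D).indicator (fun _ => tmax / πhat) ω) Q := hint1.add hint2
  have hint123 : Integrable (fun ω => (Ea ∩ Dᶜ).indicator (fun ω => Ttil ω / πhat) ω
      + (Ea ∩ D).indicator (fun _ => tmax / πhat) ω
      + Ea.indicator (fun _ => -(ν0hat * (1 - ξhat) + tmax * ξhat) / πhat) ω) Q := hint12.add hint3
  rw [hfg, integral_add hint123 (integrable_const (ν0hat * (1 - ξhat) + tmax * ξhat)),
    integral_add hint12 hint3, integral_add hint1 hint2,
    integral_indicator hs, integral_indicator hsd, integral_indicator hEa,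
    integral_div]
  simp only [setIntegral_const, integral_const, Measure.restrict_apply_univ,
    measureReal_def, measure_univ, ENNReal.toReal_one, one_smul, smul_eq_mul,
    ← hpdef, ← hPdef, ← hIdef]
  rw [hν0, hξ]
  have hpq : p + q ≠ 0 := by rw [← hPpq]; exact hP0.ne'
  rcases hrobust with hcase | ⟨hν, hξh⟩
  · rw [hcase, hPpq]
    field_simp
    ring
  · rw [hν, hξh, hν0, hξ, hPpq]
    field_simp
    ring
end

section
/- Let Q be a probability measure, T̃ a bounded real-valued random variable, and E_a, D events with π := Q(E_a) ∈ (0,1), Q(E_a ∩ D) > 0 and Q(E_a ∩ Dᶜ) > 0; set ξ := Q(D | E_a), ν(0) := E[T̃ | E_a ∩ Dᶜ] and ν(1) := E[T̃ | E_a ∩ D]. For any real numbers π̂ ∈ (0,1), ξ̂, ν̂0, ν̂1, the lower-bound pseudo-outcome φ⁻ := (1_{E_a ∩ Dᶜ}/π̂)(T̃ − ν̂0) + (ν̂0/π̂)·1_{E_a}·(1_{Dᶜ} − (1 − ξ̂)) + ν̂0(1 − ξ̂) + (1_{E_a ∩ D}/π̂)(T̃ − ν̂1) + (ν̂1/π̂)·1_{E_a}·(1_D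 − ξ̂) + ν̂1 ξ̂ satisfies the exact identity E_Q[φ⁻] = (π/π̂)(1 − ξ)ν(0) − (π/π̂)(1 − ξ̂)ν̂0 + ν̂0(1 − ξ̂) + (π/π̂) ξ ν(1) − (π/π̂) ξ̂ ν̂1 + ν̂1 ξ̂. -/
open MeasureTheory ProbabilityTheory

/-- key conditional-expectation identity in the proof of Theorem 2,
Supplement C.5: With `π := Q(E_a) ∈ (0,1)`, `ξ := Q(D | E_a)`,
`ν(0) := E[T̃ | E_a ∩ Dᶜ]`, `ν(1) := E[T̃ | E_a ∩ D]`, and arbitrary estimates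
`π̂ ∈ (0,1), ξ̂, ν̂0, ν̂1`, the lower-bound pseudo-outcome satisfies
`E_Q[φ⁻] = (π/π̂)(1 − ξ)ν(0) − (π/π̂)(1 − ξ̂)ν̂0 + ν̂0(1 − ξ̂)
          + (π/π̂) ξ ν(1) − (π/π̂) ξ̂ ν̂1 + ν̂1 ξ̂`. -/
theorem survb_lower_pseudo_outcome_expectation_identity
    {Ω : Type*} [MeasurableSpace Ω] (Q : Measure Ω) [IsProbabilityMeasure Q]
    (Ttil : Ω → ℝ) (hTm : Measurable Ttil) (M : ℝ) (hbd : ∀ ω, |Ttil ω| ≤ M)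
    (Ea D : Set Ω) (hEa : MeasurableSet Ea) (hD : MeasurableSet D)
    (hπ0 : 0 < Q Ea) (hπ1 : Q Ea < 1)
    (hED : 0 < Q (Ea ∩ D)) (hEDc : 0 < Q (Ea ∩ Dᶜ))
    (πhat ξhat ν0hat ν1hat : ℝ) (hπhat0 : 0 < πhat) (hπhat1 : πhat < 1) :
    ∫ ω, (Set.indicator (Ea ∩ Dᶜ) (fun _ => (1:ℝ)) ω / πhat * (Ttil ω - ν0hat)
        + ν0hat / πhat * Set.indicator Ea (fun _ => (1:ℝ)) ω
            * (Set.indicator Dᶜ (fun _ => (1:ℝ)) ω - (1 - ξhat))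
        + ν0hat * (1 - ξhat)
        + Set.indicator (Ea ∩ D) (fun _ => (1:ℝ)) ω / πhat * (Ttil ω - ν1hat)
        + ν1hat / πhat * Set.indicator Ea (fun _ => (1:ℝ)) ω
            * (Set.indicator D (fun _ => (1:ℝ)) ω - ξhat)
        + ν1hat * ξhat) ∂Q
      = (Q Ea).toReal / πhat * (1 - ((Q[|Ea]) D).toReal)
            * (∫ ω, Ttil ω ∂(Q[|Ea ∩ Dᶜ]))
        - (Q Ea).toReal / πhat * (1 - ξhat) * ν0hat
        + ν0hat * (1 - ξhat)
        + (Q Ea).toReal / πhat * ((Q[|Ea]) D).toReal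
            * (∫ ω, Ttil ω ∂(Q[|Ea ∩ D]))
        - (Q Ea).toReal / πhat * ξhat * ν1hat
        + ν1hat * ξhat := by

  -- notation
  have hEaD : MeasurableSet (Ea ∩ D) := hEa.inter hD
  have hEaDc : MeasurableSet (Ea ∩ Dᶜ) := hEa.inter hD.compl
  have hInt : Integrable Ttil Q := by
    refine (integrable_const M).mono' hTm.aestronglyMeasurable ?_
    exact Filter.Eventually.of_forall fun ω => by simpa using hbd ω
  have hQEa_ne : Q Ea ≠ 0 := hπ0.ne'
  have hQEa_fin : Q Ea ≠ ⊤ := measure_ne_top Q Ea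
  have hQED_fin : Q (Ea ∩ D) ≠ ⊤ := measure_ne_top Q _
  have hQEDc_fin : Q (Ea ∩ Dᶜ) ≠ ⊤ := measure_ne_top Q _
  set p : ℝ := (Q Ea).toReal with hp
  set q : ℝ := (Q (Ea ∩ D)).toReal with hq
  set r : ℝ := (Q (Ea ∩ Dᶜ)).toReal with hr
  have hppos : 0 < p := ENNReal.toReal_pos hQEa_ne hQEa_fin
  have hqpos : 0 < q := ENNReal.toReal_pos hED.ne' hQED_fin
  have hrpos : 0 < r := ENNReal.toReal_pos hEDc.ne' hQEDc_fin
  have hpqr : p = q + r := by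
    rw [hp, hq, hr, ← ENNReal.toReal_add hQED_fin hQEDc_fin]
    congr 1
    rw [← measure_inter_add_diff Ea hD, Set.diff_eq]
  -- conditional-probability value
  have hxi : ((Q[|Ea]) D).toReal = q / p := by
    rw [ProbabilityTheory.cond_apply hEa, ENNReal.toReal_mul, ENNReal.toReal_inv]
    rw [div_eq_inv_mul]
  -- conditional expectation values
  have condInt : ∀ S : Set Ω, Q S ≠ 0 → Q S ≠ ⊤ →
      (Q S).toReal * ∫ ω, Ttil ω ∂(Q[|S]) = ∫ ω in S, Ttil ω ∂Q := by
    intro S hS0 hStop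
    rw [ProbabilityTheory.cond, integral_smul_measure, smul_eq_mul, ENNReal.toReal_inv, ← mul_assoc,
      mul_inv_cancel₀ (by exact ENNReal.toReal_ne_zero.2 ⟨hS0, hStop⟩), one_mul]
  set A : ℝ := ∫ ω in Ea ∩ Dᶜ, Ttil ω ∂Q with hA
  set B : ℝ := ∫ ω in Ea ∩ D, Ttil ω ∂Q with hB
  have hnu0 : ∫ ω, Ttil ω ∂(Q[|Ea ∩ Dᶜ]) = A / r := by
    have := condInt (Ea ∩ Dᶜ) hEDc.ne' hQEDc_fin
    field_simp [← hr] at this ⊢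
    linarith [this]
  have hnu1 : ∫ ω, Ttil ω ∂(Q[|Ea ∩ D]) = B / q := by
    have := condInt (Ea ∩ D) hED.ne' hQED_fin
    field_simp [← hq] at this ⊢
    linarith [this]
  -- pointwise simplification of the integrand
  have hpt : ∀ ω, (Set.indicator (Ea ∩ Dᶜ) (fun _ => (1:ℝ)) ω / πhat * (Ttil ω - ν0hat)
        + ν0hat / πhat * Set.indicator Ea (fun _ => (1:ℝ)) ω
            * (Set.indicator Dᶜ (fun _ => (1:ℝ)) ω - (1 - ξhat))
        + ν0hat * (1 - ξhat)
        + Set.indicator (Ea ∩ D) (fun _ => (1:ℝ)) ω / πhat * (Ttil ω - ν1hat)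
        + ν1hat / πhat * Set.indicator Ea (fun _ => (1:ℝ)) ω
            * (Set.indicator D (fun _ => (1:ℝ)) ω - ξhat)
        + ν1hat * ξhat)
      = (πhat⁻¹ * (Set.indicator (Ea ∩ Dᶜ) Ttil ω + Set.indicator (Ea ∩ D) Ttil ω)
        + (-(ν0hat * (1 - ξhat) + ν1hat * ξhat) / πhat) * Set.indicator Ea (fun _ => (1:ℝ)) ω
        + (ν0hat * (1 - ξhat) + ν1hat * ξhat)) := by
    intro ω
    by_cases hωE : ω ∈ Ea <;> by_cases hωD : ω ∈ D <;>
      simp [Set.indicator_apply, hωE, hωD] <;> ring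
  rw [integral_congr_ae (Filter.Eventually.of_forall hpt)]
  have i1 : Integrable (fun ω => πhat⁻¹ * (Set.indicator (Ea ∩ Dᶜ) Ttil ω + Set.indicator (Ea ∩ D) Ttil ω)) Q :=
    (((hInt.indicator hEaDc).add (hInt.indicator hEaD)).const_mul _)
  have i2 : Integrable (fun ω => (-(ν0hat * (1 - ξhat) + ν1hat * ξhat) / πhat) * Set.indicator Ea (fun _ => (1:ℝ)) ω) Q :=
    (((integrable_const (1:ℝ)).indicator hEa).const_mul _)
  have i12 : Integrable (fun ω => πhat⁻¹ * (Set.indicator (Ea ∩ Dᶜ) Ttil ω + Set.indicator (Ea ∩ D) Ttil ω)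
      + (-(ν0hat * (1 - ξhat) + ν1hat * ξhat) / πhat) * Set.indicator Ea (fun _ => (1:ℝ)) ω) Q := i1.add i2
  rw [integral_add i12 (integrable_const _), integral_add i1 i2,
    integral_const_mul, integral_const_mul,
    integral_add (hInt.indicator hEaDc) (hInt.indicator hEaD),
    integral_indicator hEaDc, integral_indicator hEaD, integral_indicator hEa,
    integral_const, integral_const]
  simp only [← hA, ← hB, hnu0, hnu1, hxi, measure_univ, ENNReal.toReal_one, measureReal_restrict_apply_univ, measureReal_def, Measure.restrict_apply_univ, smul_eq_mul, one_mul, ← hp]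
  have h1 : p / πhat * (1 - q / p) * (A / r) = A / πhat := by
    have : p * (1 - q / p) = r := by field_simp; linarith [hpqr]
    rw [div_mul_eq_mul_div, this]
    field_simp
  have h2 : p / πhat * (q / p) * (B / q) = B / πhat := by
    field_simp
  rw [h1, h2]
  field_simp
  ring
end

section
/- Let Q be a probability measure, T̃ a bounded real-valued random variable, and E_a, D events with π := Q(E_a) ∈ (0,1) and Q(E_a ∩ Dᶜ) > 0; set ξ := Q(D | E_a) and ν(0) := E[T̃ | E_a ∩ Dᶜ]. For any real numbers π̂ ∈ (0,1), ξ̂, ν̂0, t_max, the conservative upper-bound pseudo-outcome φ⁺ := (1_{E_a ∩ Dᶜ}/π̂)(T̃ − ν̂0) + (ν̂0/π̂)·1_{E_a}·(1_{Dᶜ} − (1 − ξ̂)) + ν̂0(1 − ξ̂) + (t_max/π̂)·1_{E_a}·(1_D − ξ̂) + t_max ξ̂ satisfies the exact identity E_Q[φ⁺] = (π/π̂)(1 − ξ)ν(0) − (π/π̂)(1 − ξ̂)ν̂0 + ν̂0(1 − ξ̂) + t_max (π/π̂) ξ − t_max (π/π̂) ξ̂ + t_max ξ̂. -/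
open MeasureTheory ProbabilityTheory

/-- Eq. 21 in the proof of Theorem 2, Supplement C.5: With
`π := Q(E_a) ∈ (0,1)`, `ξ := Q(D | E_a)`, `ν(0) := E[T̃ | E_a ∩ Dᶜ]`, and arbitrary
estimates `π̂ ∈ (0,1), ξ̂, ν̂0` and constant `t_max`, the conservative upper-bound
pseudo-outcome satisfies the exact identity
`E_Q[φ⁺] = (π/π̂)(1 − ξ)ν(0) − (π/π̂)(1 − ξ̂)ν̂0 + ν̂0(1 − ξ̂)
          + t_max (π/π̂) ξ − t_max (π/π̂) ξ̂ + t_max ξ̂`. -/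
theorem survb_conservative_upper_pseudo_outcome_expectation_identity
    {Ω : Type*} [MeasurableSpace Ω] (Q : Measure Ω) [IsProbabilityMeasure Q]
    (Ttil : Ω → ℝ) (hTm : Measurable Ttil) (M : ℝ) (hbd : ∀ ω, |Ttil ω| ≤ M)
    (Ea D : Set Ω) (hEa : MeasurableSet Ea) (hD : MeasurableSet D)
    (hπ0 : 0 < Q Ea) (hπ1 : Q Ea < 1)
    (hEDc : 0 < Q (Ea ∩ Dᶜ))
    (πhat ξhat ν0hat tmax : ℝ) (hπhat0 : 0 < πhat) (hπhat1 : πhat < 1) :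
    ∫ ω, (Set.indicator (Ea ∩ Dᶜ) (fun _ => (1:ℝ)) ω / πhat * (Ttil ω - ν0hat)
        + ν0hat / πhat * Set.indicator Ea (fun _ => (1:ℝ)) ω
            * (Set.indicator Dᶜ (fun _ => (1:ℝ)) ω - (1 - ξhat))
        + ν0hat * (1 - ξhat)
        + tmax / πhat * Set.indicator Ea (fun _ => (1:ℝ)) ω
            * (Set.indicator D (fun _ => (1:ℝ)) ω - ξhat)
        + tmax * ξhat) ∂Q
      = (Q Ea).toReal / πhat * (1 - ((Q[|Ea]) D).toReal)
            * (∫ ω, Ttil ω ∂(Q[|Ea ∩ Dᶜ]))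
        - (Q Ea).toReal / πhat * (1 - ξhat) * ν0hat
        + ν0hat * (1 - ξhat)
        + tmax * ((Q Ea).toReal / πhat) * ((Q[|Ea]) D).toReal
        - tmax * ((Q Ea).toReal / πhat) * ξhat
        + tmax * ξhat := by

  classical
  -- notation
  set a : ℝ := (Q Ea).toReal with ha
  set b : ℝ := (Q (Ea ∩ Dᶜ)).toReal with hb
  set c : ℝ := (Q (Ea ∩ D)).toReal with hc
  have hQEa_ne : Q Ea ≠ ⊤ := measure_ne_top Q Ea
  have hQb_ne : Q (Ea ∩ Dᶜ) ≠ ⊤ := measure_ne_top _ _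
  have hQc_ne : Q (Ea ∩ D) ≠ ⊤ := measure_ne_top _ _
  have ha_pos : 0 < a := ENNReal.toReal_pos hπ0.ne' hQEa_ne
  have hb_pos : 0 < b := ENNReal.toReal_pos hEDc.ne' hQb_ne
  -- a = c + b
  have hsplit : Q Ea = Q (Ea ∩ D) + Q (Ea ∩ Dᶜ) := by
    have := (measure_inter_add_diff (μ := Q) Ea hD).symm
    rwa [Set.diff_eq] at this
  have habc : a = c + b := by
    rw [ha, hsplit, ENNReal.toReal_add hQc_ne hQb_ne]
  -- xi
  have hxi : ((Q[|Ea]) D).toReal = c / a := by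
    rw [ProbabilityTheory.cond_apply hEa, ENNReal.toReal_mul, ENNReal.toReal_inv]
    rw [div_eq_inv_mul]
  -- nu0
  have hnu : (∫ ω, Ttil ω ∂(Q[|Ea ∩ Dᶜ])) = b⁻¹ * ∫ ω in Ea ∩ Dᶜ, Ttil ω ∂Q := by
    rw [ProbabilityTheory.cond, integral_smul_measure, ENNReal.toReal_inv]
    rfl
  set I : ℝ := ∫ ω in Ea ∩ Dᶜ, Ttil ω ∂Q with hI
  -- integrability
  have hTint : Integrable Ttil Q :=
    (integrable_const M).mono' hTm.aestronglyMeasurable (Filter.Eventually.of_forall hbd)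
  have hEDm : MeasurableSet (Ea ∩ Dᶜ) := hEa.inter hD.compl
  have hEDm2 : MeasurableSet (Ea ∩ D) := hEa.inter hD
  have h1 : Integrable (fun ω => (1/πhat) * Set.indicator (Ea ∩ Dᶜ) Ttil ω) Q :=
    ((hTint.indicator hEDm)).const_mul _
  have h2 : Integrable (fun ω => (-(ν0hat*(1-ξhat)/πhat) - tmax*ξhat/πhat)
      * Set.indicator Ea (fun _ => (1:ℝ)) ω) Q :=
    (((integrable_const (1:ℝ)).indicator hEa)).const_mul _
  have h3 : Integrable (fun ω => (tmax/πhat) * Set.indicator (Ea ∩ D) (fun _ => (1:ℝ)) ω) Q :=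
    (((integrable_const (1:ℝ)).indicator hEDm2)).const_mul _
  have h4 : Integrable (fun _ : Ω => ν0hat*(1-ξhat) + tmax*ξhat) Q := integrable_const _
  -- pointwise rewrite of integrand
  have hfe : (fun ω => (Set.indicator (Ea ∩ Dᶜ) (fun _ => (1:ℝ)) ω / πhat * (Ttil ω - ν0hat)
        + ν0hat / πhat * Set.indicator Ea (fun _ => (1:ℝ)) ω
            * (Set.indicator Dᶜ (fun _ => (1:ℝ)) ω - (1 - ξhat))
        + ν0hat * (1 - ξhat)
        + tmax / πhat * Set.indicator Ea (fun _ => (1:ℝ)) ω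
            * (Set.indicator D (fun _ => (1:ℝ)) ω - ξhat)
        + tmax * ξhat))
      = (fun ω => (1/πhat) * Set.indicator (Ea ∩ Dᶜ) Ttil ω
        + ((-(ν0hat*(1-ξhat)/πhat) - tmax*ξhat/πhat) * Set.indicator Ea (fun _ => (1:ℝ)) ω
          + ((tmax/πhat) * Set.indicator (Ea ∩ D) (fun _ => (1:ℝ)) ω
            + (ν0hat*(1-ξhat) + tmax*ξhat)))) := by
    funext ω
    by_cases hA : ω ∈ Ea <;> by_cases hDω : ω ∈ D <;>
      simp [Set.indicator_apply, hA, hDω] <;> try ring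
  have h34 : Integrable (fun ω => (tmax/πhat) * Set.indicator (Ea ∩ D) (fun _ => (1:ℝ)) ω
      + (ν0hat*(1-ξhat) + tmax*ξhat)) Q := h3.add h4
  have h234 : Integrable (fun ω => (-(ν0hat*(1-ξhat)/πhat) - tmax*ξhat/πhat)
      * Set.indicator Ea (fun _ => (1:ℝ)) ω
      + ((tmax/πhat) * Set.indicator (Ea ∩ D) (fun _ => (1:ℝ)) ω
        + (ν0hat*(1-ξhat) + tmax*ξhat))) Q := h2.add h34
  rw [hfe, integral_add h1 h234, integral_add h2 h34, integral_add h3 h4]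
  rw [integral_const_mul, integral_const_mul, integral_const_mul,
    integral_indicator hEDm, integral_indicator_const _ hEa, integral_indicator_const _ hEDm2,
    integral_const]
  simp only [measureReal_def, measure_univ, ENNReal.toReal_one, one_smul, smul_eq_mul, mul_one, ← ha, ← hc, ← hI]
  rw [hxi, hnu]
  have hπne : πhat ≠ 0 := ne_of_gt hπhat0
  have hane : a ≠ 0 := ne_of_gt ha_pos
  have hbne : b ≠ 0 := ne_of_gt hb_pos
  have hkey : a / πhat * (1 - c / a) * (b⁻¹ * I) = I / πhat := by
    have : a - c = b := by rw [habc]; ring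
    field_simp
    rw [this]
  rw [hkey]
  field_simp
  ring
end

section
/- Let C > 0, t_max > 0 and ε ∈ (0,1) be constants, and let π, π̂, ξ, ξ̂, ν0, ν̂0, ν1, ν̂1, γ be real numbers satisfying 0 ≤ π ≤ 1, ε < π̂ < 1, 0 ≤ ξ̂ ≤ 1, |ν0| ≤ C, |ν1| ≤ C, and 0 ≤ γ ≤ t_max. Then the bias term r̂ := (π/π̂ − 1) · { (ν1 + γ − ν0)(ξ̂ − ξ) + (1 − ξ̂)(ν0 − ν̂0) + ξ̂(ν̂1 − ν1) } satisfies r̂² ≤ (3/ε²) (π − π̂)² · { (2C + t_max)² (ξ̂ − ξ)² + (ν0 − ν̂0)² + (ν̂1 − ν1)² }. In particular, the squared bias is controlled by the product of the squared propensity-score error and the squared errors of the outcome and censoring nuisance estimates. -/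
lemma aux_scale_sq (t z : ℝ) (h0 : 0 ≤ t) (h1 : t ≤ 1) : (t * z) ^ 2 ≤ z ^ 2 := by
  nlinarith [mul_nonneg (mul_nonneg (by linarith : (0:ℝ) ≤ 1 - t) (by linarith : (0:ℝ) ≤ 1 + t)) (sq_nonneg z)]

lemma aux_three_sq (a b c : ℝ) : (a + b + c) ^ 2 ≤ 3 * (a ^ 2 + b ^ 2 + c ^ 2) := by
  nlinarith [sq_nonneg (a - b), sq_nonneg (a - c), sq_nonneg (b - c)]

/-- concluding estimate of Lemma 2, Supplement C.6: Under the
boundedness conditions `0 ≤ π ≤ 1`, `ε < π̂ < 1`, `0 ≤ ξ̂ ≤ 1`, `|ν0| ≤ C`,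
`|ν1| ≤ C`, `0 ≤ γ ≤ t_max` (with `C > 0`, `t_max > 0`, `ε ∈ (0,1)`), the bias
`r̂ := (π/π̂ − 1)·{(ν1 + γ − ν0)(ξ̂ − ξ) + (1 − ξ̂)(ν0 − ν̂0) + ξ̂(ν̂1 − ν1)}` satisfies
`r̂² ≤ (3/ε²)(π − π̂)²·{(2C + t_max)²(ξ̂ − ξ)² + (ν0 − ν̂0)² + (ν̂1 − ν1)²}`. -/
theorem survb_bias_product_of_errors_bound
    (Cb tmax ε : ℝ) (hC : 0 < Cb) (htmax : 0 < tmax) (hε0 : 0 < ε) (hε1 : ε < 1)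
    (π πhat ξ ξhat ν0 ν0hat ν1 ν1hat γ : ℝ)
    (hπ0 : 0 ≤ π) (hπ1 : π ≤ 1) (hπhat0 : ε < πhat) (hπhat1 : πhat < 1)
    (hξhat0 : 0 ≤ ξhat) (hξhat1 : ξhat ≤ 1)
    (hν0 : |ν0| ≤ Cb) (hν1 : |ν1| ≤ Cb) (hγ0 : 0 ≤ γ) (hγ1 : γ ≤ tmax)
    (r : ℝ)
    (hr : r = (π / πhat - 1)
        * ((ν1 + γ - ν0) * (ξhat - ξ) + (1 - ξhat) * (ν0 - ν0hat)
            + ξhat * (ν1hat - ν1))) :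
    r ^ 2 ≤ 3 / ε ^ 2 * (π - πhat) ^ 2
        * ((2 * Cb + tmax) ^ 2 * (ξhat - ξ) ^ 2
            + (ν0 - ν0hat) ^ 2 + (ν1hat - ν1) ^ 2) := by
  have hπhatpos : (0:ℝ) < πhat := lt_trans hε0 hπhat0
  have hne : πhat ≠ 0 := ne_of_gt hπhatpos
  set S := (ν1 + γ - ν0) * (ξhat - ξ) + (1 - ξhat) * (ν0 - ν0hat) + ξhat * (ν1hat - ν1) with hS
  have hr2 : r ^ 2 * πhat ^ 2 = (π - πhat) ^ 2 * S ^ 2 := by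
    rw [hr]; field_simp
  -- bound S^2
  have habs0 : -Cb ≤ ν0 ∧ ν0 ≤ Cb := abs_le.mp hν0
  have habs1 : -Cb ≤ ν1 ∧ ν1 ≤ Cb := abs_le.mp hν1
  have hSsq : S ^ 2 ≤ 3 * ((2 * Cb + tmax) ^ 2 * (ξhat - ξ) ^ 2
      + (ν0 - ν0hat) ^ 2 + (ν1hat - ν1) ^ 2) := by
    have h1 : ((ν1 + γ - ν0) * (ξhat - ξ)) ^ 2 ≤ (2 * Cb + tmax) ^ 2 * (ξhat - ξ) ^ 2 := by
      have ha : |ν1 + γ - ν0| ≤ 2 * Cb + tmax := by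
        rw [abs_le]; constructor <;> linarith [habs0.1, habs0.2, habs1.1, habs1.2]
      have := sq_le_sq' (neg_le_of_abs_le ha |>.trans (le_refl _)) (le_of_abs_le ha)
      calc ((ν1 + γ - ν0) * (ξhat - ξ)) ^ 2 = (ν1 + γ - ν0) ^ 2 * (ξhat - ξ) ^ 2 := by ring
        _ ≤ (2 * Cb + tmax) ^ 2 * (ξhat - ξ) ^ 2 := by
            apply mul_le_mul_of_nonneg_right this (sq_nonneg _)
    have h2 : ((1 - ξhat) * (ν0 - ν0hat)) ^ 2 ≤ (ν0 - ν0hat) ^ 2 :=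
      aux_scale_sq _ _ (by linarith) (by linarith)
    have h3 : (ξhat * (ν1hat - ν1)) ^ 2 ≤ (ν1hat - ν1) ^ 2 :=
      aux_scale_sq _ _ hξhat0 hξhat1
    calc S ^ 2 ≤ 3 * (((ν1 + γ - ν0) * (ξhat - ξ)) ^ 2 + ((1 - ξhat) * (ν0 - ν0hat)) ^ 2
          + (ξhat * (ν1hat - ν1)) ^ 2) := aux_three_sq _ _ _
      _ ≤ 3 * ((2 * Cb + tmax) ^ 2 * (ξhat - ξ) ^ 2 + (ν0 - ν0hat) ^ 2 + (ν1hat - ν1) ^ 2) := by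
          linarith
  have hεsq : ε ^ 2 ≤ πhat ^ 2 := by exact pow_le_pow_left₀ hε0.le hπhat0.le 2
  have hεpos : (0:ℝ) < ε ^ 2 := by positivity
  rw [div_mul_eq_mul_div, div_mul_eq_mul_div, le_div_iff₀ hεpos]
  calc r ^ 2 * ε ^ 2 ≤ r ^ 2 * πhat ^ 2 := mul_le_mul_of_nonneg_left hεsq (sq_nonneg r)
    _ = (π - πhat) ^ 2 * S ^ 2 := hr2
    _ ≤ (π - πhat) ^ 2 * (3 * ((2 * Cb + tmax) ^ 2 * (ξhat - ξ) ^ 2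
        + (ν0 - ν0hat) ^ 2 + (ν1hat - ν1) ^ 2)) :=
        mul_le_mul_of_nonneg_left hSsq (sq_nonneg _)
    _ = 3 * (π - πhat) ^ 2 * ((2 * Cb + tmax) ^ 2 * (ξhat - ξ) ^ 2
        + (ν0 - ν0hat) ^ 2 + (ν1hat - ν1) ^ 2) := by ring
end

section
/- Let Q be a probability measure (representing the conditional distribution given covariates X = x), let T̃ be a bounded real-valued random variable, let D be an event, and let E₁, E₂ be disjoint events (the treatment events {A = a₁} and {A = a₂}) with πᵢ := Q(Eᵢ) ∈ (0,1), Q(Eᵢ ∩ D) > 0 and Q(Eᵢ ∩ Dᶜ) > 0 for i = 1, 2; set ξᵢ := Q(D | Eᵢ), νᵢ(0) := E[T̃ | Eᵢ ∩ Dᶜ] and νᵢ(1) := E[T̃ | Eᵢ ∩ D]. Given real estimates π̂ᵢ ∈ (0,1), ξ̂ᵢ, ν̂ᵢ0, ν̂ᵢ1 for i = 1, 2 and a real γ₁, define the CATE upper-bound pseudo-outcome φ⁺_{1,2} := φ⁺₁ − φ⁻₂, where φ⁺₁ is the domain-knowledge upper-bound pseudo-outcome for arm 1 (with nuisances π̂₁,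 ξ̂₁, ν̂₁0, ν̂₁1 and sensitivity γ₁) and φ⁻₂ is the lower-bound pseudo-outcome for arm 2 (with nuisances π̂₂, ξ̂₂, ν̂₂0, ν̂₂1). If for each i ∈ {1,2} either π̂ᵢ = πᵢ, or (ν̂ᵢ0 = νᵢ(0), ν̂ᵢ1 = νᵢ(1) and ξ̂ᵢ = ξᵢ), then E_Q[φ⁺_{1,2}] = [ν₁(0)(1 − ξ₁) + ν₁(1)ξ₁ + γ₁ξ₁] − [ν₂(0)(1 − ξ₂) + ν₂(1)ξ₂] = τ⁺, the upper bound on the CATE. -/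
open MeasureTheory ProbabilityTheory

lemma survb_arm {Ω : Type*} [MeasurableSpace Ω] (Q : Measure Ω) [IsProbabilityMeasure Q]
    (Ttil : Ω → ℝ) (hTm : Measurable Ttil) (M : ℝ) (hbd : ∀ ω, |Ttil ω| ≤ M)
    (E D : Set Ω) (hE : MeasurableSet E) (hD : MeasurableSet D)
    (hπ0 : 0 < Q E) (hED : 0 < Q (E ∩ D)) (hEDc : 0 < Q (E ∩ Dᶜ))
    (πhat ξhat ν0hat ν1hat γ : ℝ) (hπhat : πhat ≠ 0)
    (hrobust :
      πhat = (Q E).toReal ∨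
      (ν0hat = ∫ ω, Ttil ω ∂(Q[|E ∩ Dᶜ]) ∧
       ν1hat = ∫ ω, Ttil ω ∂(Q[|E ∩ D]) ∧
       ξhat = ((Q[|E]) D).toReal)) :
    Integrable (fun ω =>
        Set.indicator (E ∩ Dᶜ) (fun _ => (1:ℝ)) ω / πhat * (Ttil ω - ν0hat)
        + ν0hat / πhat * Set.indicator E (fun _ => (1:ℝ)) ω
            * (Set.indicator Dᶜ (fun _ => (1:ℝ)) ω - (1 - ξhat))
        + ν0hat * (1 - ξhat)
        + Set.indicator (E ∩ D) (fun _ => (1:ℝ)) ω / πhat * (Ttil ω - ν1hat)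
        + ν1hat / πhat * Set.indicator E (fun _ => (1:ℝ)) ω
            * (Set.indicator D (fun _ => (1:ℝ)) ω - ξhat)
        + ν1hat * ξhat
        + γ / πhat * Set.indicator E (fun _ => (1:ℝ)) ω
            * (Set.indicator D (fun _ => (1:ℝ)) ω - ξhat)
        + γ * ξhat) Q ∧
    (∫ ω, (Set.indicator (E ∩ Dᶜ) (fun _ => (1:ℝ)) ω / πhat * (Ttil ω - ν0hat)
        + ν0hat / πhat * Set.indicator E (fun _ => (1:ℝ)) ω
            * (Set.indicator Dᶜ (fun _ => (1:ℝ)) ω - (1 - ξhat))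
        + ν0hat * (1 - ξhat)
        + Set.indicator (E ∩ D) (fun _ => (1:ℝ)) ω / πhat * (Ttil ω - ν1hat)
        + ν1hat / πhat * Set.indicator E (fun _ => (1:ℝ)) ω
            * (Set.indicator D (fun _ => (1:ℝ)) ω - ξhat)
        + ν1hat * ξhat
        + γ / πhat * Set.indicator E (fun _ => (1:ℝ)) ω
            * (Set.indicator D (fun _ => (1:ℝ)) ω - ξhat)
        + γ * ξhat) ∂Q)
      = (∫ ω, Ttil ω ∂(Q[|E ∩ Dᶜ])) * (1 - ((Q[|E]) D).toReal)
        + (∫ ω, Ttil ω ∂(Q[|E ∩ D])) * ((Q[|E]) D).toReal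
        + γ * ((Q[|E]) D).toReal := by
  set a : ℝ := (Q (E ∩ Dᶜ)).toReal with ha_def
  set b : ℝ := (Q (E ∩ D)).toReal with hb_def
  set p : ℝ := (Q E).toReal with hp_def
  have ha : 0 < a := ENNReal.toReal_pos hEDc.ne' (measure_ne_top _ _)
  have hb : 0 < b := ENNReal.toReal_pos hED.ne' (measure_ne_top _ _)
  have hpab : p = a + b := by
    rw [ha_def, hb_def, hp_def, ← measure_inter_add_diff E hD, Set.diff_eq,
      ENNReal.toReal_add (measure_ne_top _ _) (measure_ne_top _ _)]
    ring
  have hp : 0 < p := by rw [hpab]; positivity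
  set I0 : ℝ := ∫ ω in E ∩ Dᶜ, Ttil ω ∂Q with hI0_def
  set I1 : ℝ := ∫ ω in E ∩ D, Ttil ω ∂Q with hI1_def
  have hξ : ((Q[|E]) D).toReal = b / p := by
    rw [cond_apply hE Q D, ENNReal.toReal_mul, ENNReal.toReal_inv]
    rw [div_eq_inv_mul]
  have hν0 : (∫ ω, Ttil ω ∂(Q[|E ∩ Dᶜ])) = I0 / a := by
    rw [ProbabilityTheory.cond, integral_smul_measure, ENNReal.toReal_inv, smul_eq_mul]
    rw [div_eq_inv_mul]
  have hν1 : (∫ ω, Ttil ω ∂(Q[|E ∩ D])) = I1 / b := by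
    rw [ProbabilityTheory.cond, integral_smul_measure, ENNReal.toReal_inv, smul_eq_mul]
    rw [div_eq_inv_mul]
  set k0 : ℝ := -ν0hat + ν0hat * ξhat - ν1hat * ξhat - γ * ξhat with hk0
  set k1 : ℝ := -ν0hat * (1 - ξhat) - ν1hat * ξhat + γ * (1 - ξhat) with hk1
  set k2 : ℝ := ν0hat * (1 - ξhat) + ν1hat * ξhat + γ * ξhat with hk2
  have hrep : ∀ ω,
      (Set.indicator (E ∩ Dᶜ) (fun _ => (1:ℝ)) ω / πhat * (Ttil ω - ν0hat)
        + ν0hat / πhat * Set.indicator E (fun _ => (1:ℝ)) ω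
            * (Set.indicator Dᶜ (fun _ => (1:ℝ)) ω - (1 - ξhat))
        + ν0hat * (1 - ξhat)
        + Set.indicator (E ∩ D) (fun _ => (1:ℝ)) ω / πhat * (Ttil ω - ν1hat)
        + ν1hat / πhat * Set.indicator E (fun _ => (1:ℝ)) ω
            * (Set.indicator D (fun _ => (1:ℝ)) ω - ξhat)
        + ν1hat * ξhat
        + γ / πhat * Set.indicator E (fun _ => (1:ℝ)) ω
            * (Set.indicator D (fun _ => (1:ℝ)) ω - ξhat)
        + γ * ξhat)
      = Set.indicator (E ∩ Dᶜ) (fun ω => (Ttil ω + k0) / πhat) ω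
        + Set.indicator (E ∩ D) (fun ω => (Ttil ω + k1) / πhat) ω + k2 := by
    intro ω
    have hE0 : ∀ (s : Set Ω) (f : Ω → ℝ), ω ∉ s → s.indicator f ω = 0 :=
      fun s f h => Set.indicator_of_notMem h f
    have hE1 : ∀ (s : Set Ω) (f : Ω → ℝ), ω ∈ s → s.indicator f ω = f ω :=
      fun s f h => Set.indicator_of_mem h f
    by_cases hωE : ω ∈ E
    · by_cases hωD : ω ∈ D
      · rw [hE0 (E ∩ Dᶜ) _ (by simp [hωD]), hE0 (E ∩ Dᶜ) _ (by simp [hωD]),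
          hE1 E _ hωE, hE0 Dᶜ _ (by simp [hωD]), hE1 (E ∩ D) _ ⟨hωE, hωD⟩,
          hE1 (E ∩ D) _ ⟨hωE, hωD⟩, hE1 D _ hωD]
        simp only [hk0, hk1, hk2]; ring
      · rw [hE1 (E ∩ Dᶜ) _ ⟨hωE, hωD⟩, hE1 (E ∩ Dᶜ) _ ⟨hωE, hωD⟩,
          hE1 E _ hωE, hE1 Dᶜ _ hωD, hE0 (E ∩ D) _ (by simp [hωD]),
          hE0 (E ∩ D) _ (by simp [hωD]), hE0 D _ hωD]
        simp only [hk0, hk1, hk2]; ring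
    · rw [hE0 (E ∩ Dᶜ) _ (by simp [hωE]), hE0 (E ∩ Dᶜ) _ (by simp [hωE]),
        hE0 E _ hωE, hE0 (E ∩ D) _ (by simp [hωE]), hE0 (E ∩ D) _ (by simp [hωE])]
      simp only [hk0, hk1, hk2]; ring
  have hTint : Integrable Ttil Q :=
    Integrable.mono' (integrable_const M) hTm.aestronglyMeasurable
      (Filter.Eventually.of_forall fun ω => by simpa using hbd ω)
  have hint0 : Integrable ((E ∩ Dᶜ).indicator (fun ω => (Ttil ω + k0) / πhat)) Q :=
    ((hTint.add (integrable_const k0)).div_const πhat).indicator (hE.inter hD.compl)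
  have hint1 : Integrable ((E ∩ D).indicator (fun ω => (Ttil ω + k1) / πhat)) Q :=
    ((hTint.add (integrable_const k1)).div_const πhat).indicator (hE.inter hD)
  constructor
  · exact (Integrable.congr ((hint0.add hint1).add (integrable_const k2))
      (Filter.Eventually.of_forall fun ω => (hrep ω).symm))
  have hI : ∀ (s : Set Ω), MeasurableSet s → ∀ k : ℝ,
      (∫ ω, s.indicator (fun ω => (Ttil ω + k) / πhat) ω ∂Q)
        = ((∫ ω in s, Ttil ω ∂Q) + k * (Q s).toReal) / πhat := by
    intro s hs k
    rw [integral_indicator hs]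
    rw [show (fun ω => (Ttil ω + k) / πhat) = fun ω => (Ttil ω + k) / πhat from rfl]
    rw [integral_div, integral_add (hTint.integrableOn) (integrableOn_const (measure_ne_top _ _))]
    simp [Measure.restrict_apply_univ, mul_comm, measureReal_def]
  calc ∫ ω, _ ∂Q
      = ∫ ω, ((E ∩ Dᶜ).indicator (fun ω => (Ttil ω + k0) / πhat) ω
          + (E ∩ D).indicator (fun ω => (Ttil ω + k1) / πhat) ω + k2) ∂Q := by
        exact integral_congr_ae (Filter.Eventually.of_forall hrep)
    _ = (I0 + k0 * a) / πhat + (I1 + k1 * b) / πhat + k2 := by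
        have hadd : Integrable (fun ω => (E ∩ Dᶜ).indicator (fun ω => (Ttil ω + k0) / πhat) ω
            + (E ∩ D).indicator (fun ω => (Ttil ω + k1) / πhat) ω) Q := hint0.add hint1
        rw [integral_add hadd (integrable_const k2),
          integral_add hint0 hint1, hI _ (hE.inter hD.compl) k0, hI _ (hE.inter hD) k1]
        simp [ha_def, hb_def, hI0_def, hI1_def]
    _ = (I0 / a) * (1 - ((Q[|E]) D).toReal) + (I1 / b) * ((Q[|E]) D).toReal
          + γ * ((Q[|E]) D).toReal := by
        rw [hξ]
        have hab : a + b ≠ 0 := by positivity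
        rcases hrobust with h | ⟨h0, h1, h2⟩
        · rw [h, hpab] at *
          simp only [hk0, hk1, hk2]
          field_simp
          ring
        · rw [hν0] at h0; rw [hν1] at h1; rw [hξ] at h2
          rw [hpab] at *
          simp only [hk0, hk1, hk2, h0, h1, h2]
          field_simp
          ring
  rw [hν0, hν1]

/-- double robustness of the SurvB-learner's CATE-level pseudo-outcome,
Supplement B: With disjoint treatment events `E₁, E₂`, censoring event `D`,
`πᵢ := Q(Eᵢ) ∈ (0,1)`, `ξᵢ := Q(D | Eᵢ)`, `νᵢ(0) := E[T̃ | Eᵢ ∩ Dᶜ]`,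
`νᵢ(1) := E[T̃ | Eᵢ ∩ D]`, estimates `π̂ᵢ ∈ (0,1), ξ̂ᵢ, ν̂ᵢ0, ν̂ᵢ1` and sensitivity
`γ₁`, if for each `i` either `π̂ᵢ = πᵢ` or `(ν̂ᵢ0 = νᵢ(0), ν̂ᵢ1 = νᵢ(1), ξ̂ᵢ = ξᵢ)`,
then the CATE upper-bound pseudo-outcome `φ⁺_{1,2} := φ⁺₁ − φ⁻₂` satisfies
`E_Q[φ⁺_{1,2}] = [ν₁(0)(1−ξ₁) + ν₁(1)ξ₁ + γ₁ξ₁] − [ν₂(0)(1−ξ₂) + ν₂(1)ξ₂] = τ⁺`. -/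
theorem survb_cate_upper_pseudo_outcome_doubly_robust
    {Ω : Type*} [MeasurableSpace Ω] (Q : Measure Ω) [IsProbabilityMeasure Q]
    (Ttil : Ω → ℝ) (hTm : Measurable Ttil) (M : ℝ) (hbd : ∀ ω, |Ttil ω| ≤ M)
    (E₁ E₂ D : Set Ω) (hE₁ : MeasurableSet E₁) (hE₂ : MeasurableSet E₂)
    (hD : MeasurableSet D) (hdisj : Disjoint E₁ E₂)
    (hπ₁0 : 0 < Q E₁) (hπ₁1 : Q E₁ < 1) (hπ₂0 : 0 < Q E₂) (hπ₂1 : Q E₂ < 1)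
    (hE₁D : 0 < Q (E₁ ∩ D)) (hE₁Dc : 0 < Q (E₁ ∩ Dᶜ))
    (hE₂D : 0 < Q (E₂ ∩ D)) (hE₂Dc : 0 < Q (E₂ ∩ Dᶜ))
    (πhat₁ ξhat₁ ν0hat₁ ν1hat₁ πhat₂ ξhat₂ ν0hat₂ ν1hat₂ γ₁ : ℝ)
    (hπhat₁0 : 0 < πhat₁) (hπhat₁1 : πhat₁ < 1)
    (hπhat₂0 : 0 < πhat₂) (hπhat₂1 : πhat₂ < 1)
    (hrobust₁ :
      πhat₁ = (Q E₁).toReal ∨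
      (ν0hat₁ = ∫ ω, Ttil ω ∂(Q[|E₁ ∩ Dᶜ]) ∧
       ν1hat₁ = ∫ ω, Ttil ω ∂(Q[|E₁ ∩ D]) ∧
       ξhat₁ = ((Q[|E₁]) D).toReal))
    (hrobust₂ :
      πhat₂ = (Q E₂).toReal ∨
      (ν0hat₂ = ∫ ω, Ttil ω ∂(Q[|E₂ ∩ Dᶜ]) ∧
       ν1hat₂ = ∫ ω, Ttil ω ∂(Q[|E₂ ∩ D]) ∧
       ξhat₂ = ((Q[|E₂]) D).toReal)) :
    ∫ ω, ((Set.indicator (E₁ ∩ Dᶜ) (fun _ => (1:ℝ)) ω / πhat₁ * (Ttil ω - ν0hat₁)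
        + ν0hat₁ / πhat₁ * Set.indicator E₁ (fun _ => (1:ℝ)) ω
            * (Set.indicator Dᶜ (fun _ => (1:ℝ)) ω - (1 - ξhat₁))
        + ν0hat₁ * (1 - ξhat₁)
        + Set.indicator (E₁ ∩ D) (fun _ => (1:ℝ)) ω / πhat₁ * (Ttil ω - ν1hat₁)
        + ν1hat₁ / πhat₁ * Set.indicator E₁ (fun _ => (1:ℝ)) ω
            * (Set.indicator D (fun _ => (1:ℝ)) ω - ξhat₁)
        + ν1hat₁ * ξhat₁
        + γ₁ / πhat₁ * Set.indicator E₁ (fun _ => (1:ℝ)) ω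
            * (Set.indicator D (fun _ => (1:ℝ)) ω - ξhat₁)
        + γ₁ * ξhat₁)
      - (Set.indicator (E₂ ∩ Dᶜ) (fun _ => (1:ℝ)) ω / πhat₂ * (Ttil ω - ν0hat₂)
        + ν0hat₂ / πhat₂ * Set.indicator E₂ (fun _ => (1:ℝ)) ω
            * (Set.indicator Dᶜ (fun _ => (1:ℝ)) ω - (1 - ξhat₂))
        + ν0hat₂ * (1 - ξhat₂)
        + Set.indicator (E₂ ∩ D) (fun _ => (1:ℝ)) ω / πhat₂ * (Ttil ω - ν1hat₂)
        + ν1hat₂ / πhat₂ * Set.indicator E₂ (fun _ => (1:ℝ)) ω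
            * (Set.indicator D (fun _ => (1:ℝ)) ω - ξhat₂)
        + ν1hat₂ * ξhat₂)) ∂Q
      = ((∫ ω, Ttil ω ∂(Q[|E₁ ∩ Dᶜ])) * (1 - ((Q[|E₁]) D).toReal)
          + (∫ ω, Ttil ω ∂(Q[|E₁ ∩ D])) * ((Q[|E₁]) D).toReal
          + γ₁ * ((Q[|E₁]) D).toReal)
        - ((∫ ω, Ttil ω ∂(Q[|E₂ ∩ Dᶜ])) * (1 - ((Q[|E₂]) D).toReal)
          + (∫ ω, Ttil ω ∂(Q[|E₂ ∩ D])) * ((Q[|E₂]) D).toReal) := by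
  obtain ⟨hint₁, hval₁⟩ := survb_arm Q Ttil hTm M hbd E₁ D hE₁ hD hπ₁0 hE₁D hE₁Dc
    πhat₁ ξhat₁ ν0hat₁ ν1hat₁ γ₁ hπhat₁0.ne' hrobust₁
  obtain ⟨hint₂, hval₂⟩ := survb_arm Q Ttil hTm M hbd E₂ D hE₂ hD hπ₂0 hE₂D hE₂Dc
    πhat₂ ξhat₂ ν0hat₂ ν1hat₂ 0 hπhat₂0.ne' hrobust₂
  have hrw : ∀ ω,
      (Set.indicator (E₂ ∩ Dᶜ) (fun _ => (1:ℝ)) ω / πhat₂ * (Ttil ω - ν0hat₂)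
        + ν0hat₂ / πhat₂ * Set.indicator E₂ (fun _ => (1:ℝ)) ω
            * (Set.indicator Dᶜ (fun _ => (1:ℝ)) ω - (1 - ξhat₂))
        + ν0hat₂ * (1 - ξhat₂)
        + Set.indicator (E₂ ∩ D) (fun _ => (1:ℝ)) ω / πhat₂ * (Ttil ω - ν1hat₂)
        + ν1hat₂ / πhat₂ * Set.indicator E₂ (fun _ => (1:ℝ)) ω
            * (Set.indicator D (fun _ => (1:ℝ)) ω - ξhat₂)
        + ν1hat₂ * ξhat₂)
      = (Set.indicator (E₂ ∩ Dᶜ) (fun _ => (1:ℝ)) ω / πhat₂ * (Ttil ω - ν0hat₂)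
        + ν0hat₂ / πhat₂ * Set.indicator E₂ (fun _ => (1:ℝ)) ω
            * (Set.indicator Dᶜ (fun _ => (1:ℝ)) ω - (1 - ξhat₂))
        + ν0hat₂ * (1 - ξhat₂)
        + Set.indicator (E₂ ∩ D) (fun _ => (1:ℝ)) ω / πhat₂ * (Ttil ω - ν1hat₂)
        + ν1hat₂ / πhat₂ * Set.indicator E₂ (fun _ => (1:ℝ)) ω
            * (Set.indicator D (fun _ => (1:ℝ)) ω - ξhat₂)
        + ν1hat₂ * ξhat₂
        + (0:ℝ) / πhat₂ * Set.indicator E₂ (fun _ => (1:ℝ)) ω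
            * (Set.indicator D (fun _ => (1:ℝ)) ω - ξhat₂)
        + (0:ℝ) * ξhat₂) := fun ω => by ring
  have hint₂' : Integrable (fun ω =>
      Set.indicator (E₂ ∩ Dᶜ) (fun _ => (1:ℝ)) ω / πhat₂ * (Ttil ω - ν0hat₂)
        + ν0hat₂ / πhat₂ * Set.indicator E₂ (fun _ => (1:ℝ)) ω
            * (Set.indicator Dᶜ (fun _ => (1:ℝ)) ω - (1 - ξhat₂))
        + ν0hat₂ * (1 - ξhat₂)
        + Set.indicator (E₂ ∩ D) (fun _ => (1:ℝ)) ω / πhat₂ * (Ttil ω - ν1hat₂)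
        + ν1hat₂ / πhat₂ * Set.indicator E₂ (fun _ => (1:ℝ)) ω
            * (Set.indicator D (fun _ => (1:ℝ)) ω - ξhat₂)
        + ν1hat₂ * ξhat₂) Q :=
    hint₂.congr (Filter.Eventually.of_forall fun ω => (hrw ω).symm)
  rw [integral_sub hint₁ hint₂', hval₁,
    integral_congr_ae (Filter.Eventually.of_forall hrw), hval₂]
  ring
end
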